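/- arXiv:math/9812139 — 3 statements merged into one kernel-verified Lean document; each statement's English description precedes it below -/
import Mathlib

section
/- Let $r \geq 2$ be an integer and consider the cyclic quotient $X = \mathbb{C}^3/\mathbb{Z}_r(1/r, -1/r, 1/r)$, i.e. the invariant ring of monomials $x^ay^bz^c$ with $a - b + c \equiv 0 \pmod r$. Then $\dim_{\mathbb{C}} m_{X,0}^n/m_{X,0}^{n+1} = (r+2)\frac{n^2}{2} + (r+4)\frac{n}{2} + 1$ for all $n \geq 0$; in particular $\mathrm{mult}_0 X = r+2$ and $\mathrm{emb\,dim}_0 X = r+4 = \mathrm{mult}_0 X + 2$. -/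
open Finset Filter

/-- The order (in the maximal ideal of the invariant ring) of an invariant
monomial `x^a y^b z^c` (with `a + b ≡ c mod r`) of the cyclic quotient
`C³/Z_r(1/r, 1/r, -1/r)`: using the generators `x^i y^{r-i}` (`0 ≤ i ≤ r`),
`xz`, `yz`, `z^r`, it equals `min(a+b, c)` plus `|a+b-c| / r`. -/
def invOrd (r a b c : ℕ) : ℕ :=
  min (a + b) c + (if c ≤ a + b then (a + b - c) / r else (c - (a + b)) / r)

/-- The number of invariant monomials of the quotient `X = C³/Z_r(1/r,1/r,-1/r)`
of order exactly `n`, i.e. `dim m^n/m^{n+1}`. -/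
def gradedDim (r n : ℕ) : ℕ :=
  ((Finset.range (n * r + 1) ×ˢ Finset.range (n * r + 1) ×ˢ
      Finset.range (n * r + 1)).filter
    (fun p => (p.1 + p.2.1) % r = p.2.2 % r ∧ invOrd r p.1 p.2.1 p.2.2 = n)).card

private def fwdQT (r n : ℕ) : ((_ : ℕ) × ℕ) ⊕ ((_ : ℕ) × ℕ) → ℕ × ℕ × ℕ
  | .inl x => (x.2, x.1 - x.2, x.1 + r * (n - x.1))
  | .inr x => (x.2, x.1 + r * (n - x.1) - x.2, x.1)

private def bwdQT : ℕ × ℕ × ℕ → ((_ : ℕ) × ℕ) ⊕ ((_ : ℕ) × ℕ) :=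
  fun p => if p.1 + p.2.1 ≤ p.2.2 then .inl ⟨p.1 + p.2.1, p.1⟩ else .inr ⟨p.2.2, p.1⟩

lemma gradedDim_eq (r n : ℕ) (hr : 1 ≤ r) :
    gradedDim r n
      = (∑ t ∈ range (n+1), (t+1)) + ∑ t ∈ range n, (t + r*(n-t) + 1) := by
  unfold gradedDim
  rw [Finset.card_nbij'
      (t := ((range (n+1)).sigma fun t => range (t+1)).disjSum
             ((range n).sigma fun t => range (t + r*(n-t) + 1)))
      bwdQT (fwdQT r n) ?hi ?hj ?li ?ri]
  · rw [Finset.card_disjSum, Finset.card_sigma, Finset.card_sigma]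
    simp [Finset.card_range]
  case hi =>
    rintro ⟨a, b, c⟩ hp
    simp only [Finset.mem_coe, Finset.mem_filter, Finset.mem_product, Finset.mem_range] at hp
    obtain ⟨⟨ha, hb, hc⟩, hmod, hord⟩ := hp
    unfold bwdQT
    by_cases h : a + b ≤ c
    · rw [if_pos h]
      simp only [Finset.mem_coe, Finset.inl_mem_disjSum, Finset.mem_sigma, Finset.mem_range]
      unfold invOrd at hord
      rw [min_eq_left h] at hord
      omega
    · rw [if_neg h]
      simp only [Finset.mem_coe, Finset.inr_mem_disjSum, Finset.mem_sigma, Finset.mem_range]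
      have hcle : c ≤ a + b := by omega
      obtain ⟨k, hk⟩ := (Nat.modEq_iff_dvd' hcle).mp hmod.symm
      unfold invOrd at hord
      rw [min_eq_right hcle, if_pos hcle, hk, Nat.mul_div_cancel_left k hr] at hord
      have hkpos : 1 ≤ k := by
        rcases Nat.eq_zero_or_pos k with h0 | h0
        · subst h0; simp at hk; omega
        · exact h0
      have hnc : n - c = k := by omega
      rw [hnc]
      omega
  case hj =>
    rintro (⟨t, a⟩ | ⟨t, a⟩) hx
    · simp only [Finset.mem_coe, Finset.inl_mem_disjSum, Finset.mem_sigma, Finset.mem_range] at hx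
      obtain ⟨ht, ha⟩ := hx
      simp only [fwdQT, Finset.mem_coe, Finset.mem_filter, Finset.mem_product, Finset.mem_range]
      set k := n - t with hkdef
      have hn : n = t + k := by omega
      have htr : t ≤ t * r := Nat.le_mul_of_pos_right t hr
      have hnr : n * r = t * r + k * r := by rw [hn, Nat.add_mul]
      have hmc : r * k = k * r := Nat.mul_comm r k
      refine ⟨⟨by omega, by omega, by omega⟩, ?_, ?_⟩
      · have hab : a + (t - a) = t := by omega
        rw [hab, Nat.add_mul_mod_self_left]
      · unfold invOrd
        have hab : a + (t - a) = t := by omega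
        rw [hab, min_eq_left (Nat.le_add_right _ _)]
        split_ifs with hif
        · have hk0 : r * k = 0 := by omega
          have : k = 0 := by
            rcases Nat.eq_zero_or_pos k with h0 | h0
            · exact h0
            · exact absurd hk0 (by positivity)
          simp [hk0]; omega
        · rw [Nat.add_sub_cancel_left, Nat.mul_div_cancel_left k hr]; omega
    · simp only [Finset.mem_coe, Finset.inr_mem_disjSum, Finset.mem_sigma, Finset.mem_range] at hx
      obtain ⟨ht, ha⟩ := hx
      simp only [fwdQT, Finset.mem_coe, Finset.mem_filter, Finset.mem_product, Finset.mem_range]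
      set k := n - t with hkdef
      have hk1 : 1 ≤ k := by omega
      have hn : n = t + k := by omega
      have htr : t ≤ t * r := Nat.le_mul_of_pos_right t hr
      have hnr : n * r = t * r + k * r := by rw [hn, Nat.add_mul]
      have hkr : 1 ≤ r * k := by
        calc 1 = 1 * 1 := by norm_num
        _ ≤ r * k := Nat.mul_le_mul hr hk1
      have hmc : r * k = k * r := Nat.mul_comm r k
      refine ⟨⟨by omega, by omega, by omega⟩, ?_, ?_⟩
      · have hab : a + (t + r * k - a) = t + r * k := by omega
        rw [hab, Nat.add_mul_mod_self_left]
      · unfold invOrd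
        have hab : a + (t + r * k - a) = t + r * k := by omega
        rw [hab, min_eq_right (by omega), if_pos (by omega),
          Nat.add_sub_cancel_left, Nat.mul_div_cancel_left k hr]
        omega
  case li =>
    rintro ⟨a, b, c⟩ hp
    simp only [Finset.mem_coe, Finset.mem_filter, Finset.mem_product, Finset.mem_range] at hp
    obtain ⟨⟨ha, hb, hc⟩, hmod, hord⟩ := hp
    unfold bwdQT
    by_cases h : a + b ≤ c
    · rw [if_pos h]
      obtain ⟨k, hk⟩ := (Nat.modEq_iff_dvd' h).mp hmod
      unfold invOrd at hord
      rw [min_eq_left h] at hord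
      simp only [fwdQT]
      have hb' : a + b - a = b := by omega
      rw [hb']
      have hc' : (a + b) + r * (n - (a + b)) = c := by
        by_cases hif : c ≤ a + b
        · rw [if_pos hif] at hord
          have : c = a + b := by omega
          subst this
          simp at hord ⊢
          omega
        · rw [if_neg hif, hk, Nat.mul_div_cancel_left k hr] at hord
          have : n - (a + b) = k := by omega
          rw [this]; omega
      rw [hc']
    · rw [if_neg h]
      have hcle : c ≤ a + b := by omega
      obtain ⟨k, hk⟩ := (Nat.modEq_iff_dvd' hcle).mp hmod.symm
      unfold invOrd at hord
      rw [min_eq_right hcle, if_pos hcle, hk, Nat.mul_div_cancel_left k hr] at hord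
      simp only [fwdQT]
      have : n - c = k := by omega
      rw [this]
      have hb' : c + r * k - a = b := by omega
      rw [hb']
  case ri =>
    rintro (⟨t, a⟩ | ⟨t, a⟩) hx
    · simp only [Finset.mem_coe, Finset.inl_mem_disjSum, Finset.mem_sigma, Finset.mem_range] at hx
      obtain ⟨ht, ha⟩ := hx
      simp only [fwdQT, bwdQT]
      simp only [show a + (t - a) ≤ t + r * (n - t) by omega, ↓reduceIte]
      have : a + (t - a) = t := by omega
      simp [this]
    · simp only [Finset.mem_coe, Finset.inr_mem_disjSum, Finset.mem_sigma, Finset.mem_range] at hx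
      obtain ⟨ht, ha⟩ := hx
      have hk1 : 1 ≤ n - t := by omega
      have hkr : 1 ≤ r * (n - t) := by
        calc 1 = 1 * 1 := by norm_num
        _ ≤ r * (n - t) := Nat.mul_le_mul hr hk1
      simp only [fwdQT, bwdQT]
      have hab : a + (t + r * (n - t) - a) = t + r * (n - t) := by omega
      simp only [hab, show ¬ (t + r * (n - t) ≤ t) by omega, ↓reduceIte]

lemma two_mul_gradedDim (r n : ℕ) (hr : 1 ≤ r) :
    2 * gradedDim r n = (r + 2) * n ^ 2 + (r + 4) * n + 2 := by
  rw [gradedDim_eq r n hr]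
  have h2 : ∑ t ∈ range n, (n - t) = (∑ t ∈ range n, t) + n := by
    rw [← Finset.sum_range_reflect (fun t => n - t) n]
    have h2' : ∑ j ∈ range n, (n - (n - 1 - j)) = ∑ j ∈ range n, (j + 1) :=
      Finset.sum_congr rfl (fun j hj => by rw [Finset.mem_range] at hj; omega)
    rw [h2', Finset.sum_add_distrib, Finset.sum_const, Finset.card_range, smul_eq_mul, mul_one]
  have h1 : ∑ t ∈ range (n+1), (t+1) = (∑ t ∈ range n, t) + n + (n + 1) := by
    rw [Finset.sum_add_distrib, Finset.sum_const, Finset.card_range, smul_eq_mul, mul_one,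
      Finset.sum_range_succ]
  have h3 : ∑ t ∈ range n, (t + r*(n-t) + 1)
      = (∑ t ∈ range n, t) + r * ((∑ t ∈ range n, t) + n) + n := by
    rw [Finset.sum_add_distrib, Finset.sum_add_distrib, Finset.sum_const, Finset.card_range,
      smul_eq_mul, mul_one, ← Finset.mul_sum, h2]
  rw [h1, h3]
  have hS := Finset.sum_range_id_mul_two n
  rcases n with _ | m
  · simp
  · rw [Nat.succ_sub_one] at hS
    zify at hS ⊢
    linear_combination (2 + (r:ℤ)) * hS

lemma hsQT (r n : ℕ) (hr : 2 ≤ r) :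
    12 * (∑ j ∈ range n, gradedDim r j) + (2 * r - 2) * n
      = 2 * (r + 2) * n ^ 3 + 6 * n ^ 2 := by
  induction n with
  | zero => simp
  | succ m ih =>
    have hg := two_mul_gradedDim r m (by omega)
    rw [Finset.sum_range_succ]
    zify [show (2:ℕ) ≤ 2*r from by omega] at ih hg ⊢
    linear_combination ih + 6 * hg

/-- For `X = C³/Z_r(1/r,1/r,-1/r)` with `r ≥ 2`:
`dim m^n/m^{n+1} = (r+2) n²/2 + (r+4) n/2 + 1` for all `n ≥ 0`; in particular
the multiplicity of `X` at the origin (3! times the leading coefficient of the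
Hilbert–Samuel function `dim O/m^n = ∑_{j<n} dim m^j/m^{j+1}`) is `r + 2`, and
the embedding dimension `dim m/m²` is `r + 4 = (r + 2) + 2`. -/
theorem quotient_threefold_graded_dims (r : ℕ) (hr : 2 ≤ r) :
    (∀ n : ℕ, 2 * gradedDim r n = (r + 2) * n ^ 2 + (r + 4) * n + 2) ∧
    Tendsto
      (fun n : ℕ => 6 * ((∑ j ∈ Finset.range n, gradedDim r j : ℕ) : ℝ) / (n : ℝ) ^ 3)
      atTop (nhds ((r : ℝ) + 2)) ∧
    gradedDim r 1 = r + 4 ∧ gradedDim r 1 = (r + 2) + 2 := by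
  have h1 : ∀ n : ℕ, 2 * gradedDim r n = (r + 2) * n ^ 2 + (r + 4) * n + 2 :=
    fun n => two_mul_gradedDim r n (by omega)
  have hdim1 : gradedDim r 1 = r + 4 := by have := h1 1; norm_num at this; omega
  refine ⟨h1, ?_, hdim1, by omega⟩
  have l1 : Tendsto (fun n : ℕ => 1/(n:ℝ)) atTop (nhds 0) :=
    tendsto_one_div_atTop_nhds_zero_nat
  have l2 : Tendsto
      (fun n : ℕ => (((r:ℝ)+2) + 3*(1/(n:ℝ)) - ((r:ℝ)-1)*(1/(n:ℝ)*(1/(n:ℝ)))))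
      atTop (nhds (((r:ℝ)+2) + 3*0 - ((r:ℝ)-1)*(0*0))) :=
    (tendsto_const_nhds.add (l1.const_mul 3)).sub ((l1.mul l1).const_mul _)
  rw [show ((r:ℝ)+2) + 3*0 - ((r:ℝ)-1)*(0*0) = (r:ℝ) + 2 by ring] at l2
  refine Tendsto.congr' ?_ l2
  filter_upwards [eventually_ge_atTop 1] with n hn
  have hk := hsQT r n hr
  have hn0 : (n:ℝ) ≠ 0 := by
    simp only [ne_eq, Nat.cast_eq_zero]; omega
  zify [show (2:ℕ) ≤ 2*r from by omega] at hk
  have hkR : 12 * ((∑ j ∈ Finset.range n, gradedDim r j : ℕ) : ℝ)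
      + (2*(r:ℝ) - 2) * (n:ℝ) = 2*((r:ℝ)+2)*(n:ℝ)^3 + 6*(n:ℝ)^2 := by
    exact_mod_cast hk
  push_cast at hkR ⊢
  field_simp
  linear_combination (-1/2 : ℝ) * hkR
end

section
/- Let $r \geq 2$ and $a$ with $0 < a < r$ and $\gcd$ conditions so that $S_a = \mathbb{C}^2/\mathbb{Z}_r(a/r, 1/r)$ and $S_{-a} = \mathbb{C}^2/\mathbb{Z}_r(-a/r, 1/r)$ are surface quotient singularities, and $X = \mathbb{C}^3/\mathbb{Z}_r(a/r, -a/r, 1/r)$. Then $\mathrm{mult}_0 X = \mathrm{mult}_0 S_a + \mathrm{mult}_0 S_{-a}$, $\mathrm{emb\,dim}_0 X = \mathrm{emb\,dim}_0 S_a + \mathrm{emb\,dim}_0 S_{-a}$, and $\mathrm{emb\,dim}_0 X = \mathrm{mult}_0 X + 2$. -/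
open MvPolynomial Filter

set_option synthInstance.maxHeartbeats 1000000
set_option maxHeartbeats 1000000

/-- A primitive `r`-th root of unity in `ℂ`. -/
noncomputable def zetaC (r : ℕ) : ℂ := Complex.exp (2 * Real.pi * Complex.I / r)

/-- The algebra endomorphism of a polynomial ring scaling the variable `i`
by `ζ_r ^ (w i)`: the generator of the `Z_r`-action with weights `w`. -/
noncomputable def scaleHom {σ : Type} (r : ℕ) (w : σ → ℕ) :
    MvPolynomial σ ℂ →ₐ[ℂ] MvPolynomial σ ℂ :=
  aeval (fun i => C (zetaC r ^ (w i)) * X i)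

/-- The ring of invariants of the `Z_r`-action with weights `w`. -/
noncomputable def invAlg {σ : Type} (r : ℕ) (w : σ → ℕ) :
    Subalgebra ℂ (MvPolynomial σ ℂ) :=
  AlgHom.equalizer (scaleHom r w) (AlgHom.id ℂ (MvPolynomial σ ℂ))

/-- The maximal ideal of the origin in the invariant ring: the kernel of
evaluation at `0`. -/
noncomputable def maxIdl {σ : Type} (r : ℕ) (w : σ → ℕ) :
    Ideal (invAlg r w) :=
  RingHom.ker ((aeval (fun _ : σ => (0 : ℂ))).comp (invAlg r w).val).toRingHom

/-- The Hilbert–Samuel function `n ↦ dim_ℂ O/m^n` of the quotient singularity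
with weights `w`. -/
noncomputable def hsf {σ : Type} (r : ℕ) (w : σ → ℕ) (n : ℕ) : ℕ :=
  Module.finrank ℂ ((↥(invAlg r w)) ⧸ ((maxIdl r w) ^ n : Ideal (invAlg r w)))

namespace QS

variable {σ : Type} [Fintype σ] [DecidableEq σ]

/-- weight of an exponent vector -/
def wt (w : σ → ℕ) (d : σ →₀ ℕ) : ℕ := ∑ i, w i * d i

/-- `d` is a sum of at least `n` nonzero invariant exponent vectors. -/
def SumN (r : ℕ) (w : σ → ℕ) (n : ℕ) (d : σ →₀ ℕ) : Prop :=
  ∃ l : Multiset (σ →₀ ℕ), n ≤ Multiset.card l ∧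
    (∀ e ∈ l, (r ∣ wt w e ∧ e ≠ 0)) ∧ l.sum = d

lemma wt_add (w : σ → ℕ) (d e : σ →₀ ℕ) : wt w (d + e) = wt w d + wt w e := by
  simp [wt, Finsupp.add_apply, Nat.mul_add, Finset.sum_add_distrib]

lemma wt_zero (w : σ → ℕ) : wt w (0 : σ →₀ ℕ) = 0 := by simp [wt]

lemma sumN_dvd {r : ℕ} {w : σ → ℕ} {n : ℕ} {d : σ →₀ ℕ} (h : SumN r w n d) :
    r ∣ wt w d := by
  obtain ⟨l, -, hl, rfl⟩ := h
  induction l using Multiset.induction with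
  | empty => simp [wt_zero]
  | cons e l ih =>
      simp only [Multiset.sum_cons, wt_add]
      exact dvd_add (hl e (Multiset.mem_cons_self e l)).1
        (ih (fun e he => hl e (Multiset.mem_cons_of_mem he)))

lemma sumN_mono {r : ℕ} {w : σ → ℕ} {n m : ℕ} {d : σ →₀ ℕ} (h : SumN r w n d)
    (hm : m ≤ n) : SumN r w m d := by
  obtain ⟨l, h1, h2, h3⟩ := h; exact ⟨l, le_trans hm h1, h2, h3⟩

lemma sumN_zero {r : ℕ} {w : σ → ℕ} {d : σ →₀ ℕ} (h : r ∣ wt w d) :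
    SumN r w 0 d := by
  by_cases hd : d = 0
  · exact ⟨0, by simp, by simp, by simp [hd]⟩
  · exact ⟨{d}, by simp, by simp [h, hd], by simp⟩

lemma sumN_one {r : ℕ} {w : σ → ℕ} {d : σ →₀ ℕ} (h : r ∣ wt w d) (hd : d ≠ 0) :
    SumN r w 1 d :=
  ⟨{d}, by simp, by simp [h, hd], by simp⟩

lemma sumN_add {r : ℕ} {w : σ → ℕ} {n m : ℕ} {d e : σ →₀ ℕ}
    (h1 : SumN r w n d) (h2 : SumN r w m e) : SumN r w (n + m) (d + e) := by
  obtain ⟨l1, c1, p1, s1⟩ := h1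
  obtain ⟨l2, c2, p2, s2⟩ := h2
  refine ⟨l1 + l2, ?_, ?_, by simp [s1, s2]⟩
  · simp only [Multiset.card_add]; omega
  · intro x hx
    rcases Multiset.mem_add.mp hx with h | h
    · exact p1 x h
    · exact p2 x h

lemma zeta_pow_eq_one_iff {r : ℕ} (hr : 2 ≤ r) (m : ℕ) :
    zetaC r ^ m = 1 ↔ r ∣ m :=
  (Complex.isPrimitiveRoot_exp r (by omega)).pow_eq_one_iff_dvd m

lemma wt_eq_sum (w : σ → ℕ) (d : σ →₀ ℕ) :
    wt w d = d.sum fun i e => w i * e := by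
  rw [Finsupp.sum, wt]
  refine (Finset.sum_subset (Finset.subset_univ _) ?_).symm
  intro i _ hi
  rw [Finsupp.notMem_support_iff.mp hi, Nat.mul_zero]

lemma scaleHom_monomial (r : ℕ) (w : σ → ℕ) (d : σ →₀ ℕ) (c : ℂ) :
    scaleHom r w (monomial d c) = monomial d (zetaC r ^ wt w d * c) := by
  rw [scaleHom, aeval_monomial]
  have h1 : (d.prod fun i e => (C (zetaC r ^ w i) * X i : MvPolynomial σ ℂ) ^ e)
      = C (zetaC r ^ wt w d) * d.prod fun i e => (X i : MvPolynomial σ ℂ) ^ e := by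
    have : (fun (i : σ) (e : ℕ) => (C (zetaC r ^ w i) * X i : MvPolynomial σ ℂ) ^ e)
        = fun i e => (C ((zetaC r ^ (w i * e))) : MvPolynomial σ ℂ) *
          (X i : MvPolynomial σ ℂ) ^ e := by
      funext i e; rw [mul_pow, ← C_pow, ← pow_mul]
    rw [this, Finsupp.prod_mul]
    congr 1
    rw [← map_finsuppProd (C : ℂ →+* MvPolynomial σ ℂ)]
    congr 1
    rw [Finsupp.prod, Finset.prod_pow_eq_pow_sum]
    rw [wt_eq_sum, Finsupp.sum]
  rw [h1, monomial_eq, algebraMap_eq, C_mul]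
  ring

lemma coeff_scaleHom (r : ℕ) (w : σ → ℕ) (p : MvPolynomial σ ℂ) (d : σ →₀ ℕ) :
    coeff d (scaleHom r w p) = zetaC r ^ wt w d * coeff d p := by
  conv_lhs => rw [p.as_sum]
  rw [map_sum]
  have : ∀ e ∈ p.support, scaleHom r w (monomial e (coeff e p))
      = monomial e (zetaC r ^ wt w e * coeff e p) := fun e _ => scaleHom_monomial r w e _
  rw [Finset.sum_congr rfl this]
  rw [coeff_sum]
  simp only [coeff_monomial]
  rw [Finset.sum_ite_eq' p.support d (fun e => zetaC r ^ wt w e * coeff e p)]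
  by_cases hd : d ∈ p.support
  · simp [hd]
  · simp [hd, MvPolynomial.notMem_support_iff.mp hd]

lemma mem_invAlg_iff {r : ℕ} (hr : 2 ≤ r) (w : σ → ℕ) (p : MvPolynomial σ ℂ) :
    p ∈ invAlg r w ↔ ∀ d ∈ p.support, r ∣ wt w d := by
  rw [invAlg, AlgHom.mem_equalizer]
  constructor
  · intro h d hd
    have h2 := congrArg (coeff d) h
    rw [coeff_scaleHom] at h2
    simp only [AlgHom.coe_id, id_eq] at h2
    have hc : coeff d p ≠ 0 := mem_support_iff.mp hd
    have h3 : zetaC r ^ wt w d = 1 :=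
      mul_right_cancel₀ hc (h2.trans (one_mul _).symm)
    exact (zeta_pow_eq_one_iff hr _).mp h3
  · intro h
    show scaleHom r w p = p
    apply MvPolynomial.ext
    intro d
    rw [coeff_scaleHom]
    by_cases hd : d ∈ p.support
    · rw [(zeta_pow_eq_one_iff hr _).mpr (h d hd), one_mul]
    · rw [MvPolynomial.notMem_support_iff.mp hd, mul_zero]

lemma mono_mem {r : ℕ} (hr : 2 ≤ r) {w : σ → ℕ} {d : σ →₀ ℕ} (h : r ∣ wt w d) :
    (monomial d (1:ℂ)) ∈ invAlg r w := by
  rw [mem_invAlg_iff hr]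
  intro e he
  have := MvPolynomial.support_monomial_subset he
  simp only [Finset.mem_singleton] at this
  subst this; exact h

/-- the invariant monomial as an element of the invariant algebra -/
noncomputable def qmono {r : ℕ} (hr : 2 ≤ r) {w : σ → ℕ} {d : σ →₀ ℕ}
    (h : r ∣ wt w d) : invAlg r w := ⟨monomial d 1, mono_mem hr h⟩

lemma mem_maxIdl_iff {r : ℕ} {w : σ → ℕ} (x : invAlg r w) :
    x ∈ maxIdl r w ↔ constantCoeff (x : MvPolynomial σ ℂ) = 0 := by
  rw [maxIdl, RingHom.mem_ker]
  simp only [AlgHom.toRingHom_eq_coe, RingHom.coe_coe, AlgHom.coe_comp,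
    Function.comp_apply, Subalgebra.coe_val]
  rw [aeval_zero']
  simp

lemma qmono_mem_maxIdl {r : ℕ} (hr : 2 ≤ r) {w : σ → ℕ} {d : σ →₀ ℕ}
    (h : r ∣ wt w d) (hd : d ≠ 0) : qmono hr h ∈ maxIdl r w := by
  rw [mem_maxIdl_iff]
  simp [qmono, constantCoeff_monomial, hd]

lemma qmono_mem_pow {r : ℕ} (hr : 2 ≤ r) {w : σ → ℕ} {n : ℕ} :
    ∀ {d : σ →₀ ℕ} (h : r ∣ wt w d), SumN r w n d → qmono hr h ∈ (maxIdl r w) ^ n := by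
  induction n with
  | zero => intro d h _; simp
  | succ n ih =>
      intro d h hs
      obtain ⟨l, hc, hmem, hsum⟩ := hs
      have hne : l ≠ 0 := by
        intro h0; rw [h0] at hc; simp at hc
      obtain ⟨e, hel⟩ := Multiset.exists_mem_of_ne_zero hne
      obtain ⟨l', rfl⟩ := Multiset.exists_cons_of_mem hel
      have he : r ∣ wt w e ∧ e ≠ 0 := hmem e (Multiset.mem_cons_self e l')
      have hl' : SumN r w n l'.sum := by
        refine ⟨l', ?_, fun x hx => hmem x (Multiset.mem_cons_of_mem hx), rfl⟩
        rw [Multiset.card_cons] at hc; omega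
      have hwl' : r ∣ wt w l'.sum := sumN_dvd hl'
      have hde : d = e + l'.sum := by rw [← hsum, Multiset.sum_cons]
      have key : qmono hr h = qmono hr he.1 * qmono hr hwl' := by
        apply Subtype.ext
        simp only [qmono, MulMemClass.coe_mul, monomial_mul, mul_one]
        rw [hde]
      rw [key, pow_succ']
      exact Ideal.mul_mem_mul (qmono_mem_maxIdl hr he.1 he.2) (ih hwl' hl')

/-- span of monomials with exponents that are sums of at least `n` nonzero
invariant vectors -/
noncomputable def monSpan (r : ℕ) (w : σ → ℕ) (n : ℕ) : Submodule ℂ (MvPolynomial σ ℂ) :=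
  Submodule.span ℂ {q | ∃ d, SumN r w n d ∧ q = monomial d 1}

lemma coeff_eq_zero_of_mem_monSpan {r : ℕ} {w : σ → ℕ} {n : ℕ} {p : MvPolynomial σ ℂ}
    (hp : p ∈ monSpan r w n) {d : σ →₀ ℕ} (hd : ¬ SumN r w n d) :
    coeff d p = 0 := by
  have : monSpan r w n ≤ LinearMap.ker (lcoeff ℂ d) := by
    rw [monSpan, Submodule.span_le]
    rintro q ⟨e, he, rfl⟩
    simp only [SetLike.mem_coe, LinearMap.mem_ker, lcoeff_apply, coeff_monomial]
    have : e ≠ d := fun h => hd (h ▸ he)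
    simp [this]
  simpa using this hp

lemma monSpan_mul {r : ℕ} {w : σ → ℕ} {n m : ℕ} {p q : MvPolynomial σ ℂ}
    (hp : p ∈ monSpan r w n) (hq : q ∈ monSpan r w m) :
    p * q ∈ monSpan r w (n + m) := by
  have h1 : p * q ∈ monSpan r w n * monSpan r w m := Submodule.mul_mem_mul hp hq
  have h2 : monSpan r w n * monSpan r w m ≤ monSpan r w (n + m) := by
    rw [monSpan, monSpan, Submodule.span_mul_span]
    rw [Submodule.span_le]
    rintro x ⟨y, ⟨dy, hdy, rfl⟩, z, ⟨dz, hdz, rfl⟩, rfl⟩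
    show ((monomial dy (1:ℂ)) * monomial dz 1) ∈ _
    rw [monomial_mul, one_mul]
    exact Submodule.subset_span ⟨dy + dz, sumN_add hdy hdz, rfl⟩
  exact h2 h1

lemma mem_monSpan_of_invariant {r : ℕ} (hr : 2 ≤ r) {w : σ → ℕ} {x : invAlg r w} :
    (x : MvPolynomial σ ℂ) ∈ monSpan r w 0 := by
  have hsupp := (mem_invAlg_iff hr w _).mp x.2
  rw [(x : MvPolynomial σ ℂ).as_sum]
  apply Submodule.sum_mem
  intro d hd
  have : (monomial d (coeff d (x:MvPolynomial σ ℂ))) = (coeff d (x:MvPolynomial σ ℂ)) • monomial d (1:ℂ) := by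
    rw [smul_monomial, smul_eq_mul, mul_one]
  rw [this]
  exact Submodule.smul_mem _ _ (Submodule.subset_span ⟨d, sumN_zero (hsupp d hd), rfl⟩)

lemma mem_monSpan_of_maxIdl {r : ℕ} (hr : 2 ≤ r) {w : σ → ℕ} {x : invAlg r w}
    (hx : x ∈ maxIdl r w) : (x : MvPolynomial σ ℂ) ∈ monSpan r w 1 := by
  have hsupp := (mem_invAlg_iff hr w _).mp x.2
  have hcc : constantCoeff (x : MvPolynomial σ ℂ) = 0 := (mem_maxIdl_iff x).mp hx
  rw [(x : MvPolynomial σ ℂ).as_sum]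
  apply Submodule.sum_mem
  intro d hd
  have hdne : d ≠ 0 := by
    intro h0
    subst h0
    rw [mem_support_iff] at hd
    exact hd hcc
  have : (monomial d (coeff d (x:MvPolynomial σ ℂ))) = (coeff d (x:MvPolynomial σ ℂ)) • monomial d (1:ℂ) := by
    rw [smul_monomial, smul_eq_mul, mul_one]
  rw [this]
  exact Submodule.smul_mem _ _
    (Submodule.subset_span ⟨d, sumN_one (hsupp d hd) hdne, rfl⟩)

lemma pow_subset_monSpan {r : ℕ} (hr : 2 ≤ r) {w : σ → ℕ} {n : ℕ} :
    ∀ {x : invAlg r w}, x ∈ (maxIdl r w) ^ n → (x : MvPolynomial σ ℂ) ∈ monSpan r w n := by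
  induction n with
  | zero => intro x _; exact mem_monSpan_of_invariant hr
  | succ n ih =>
      intro x hx
      rw [pow_succ] at hx
      refine Submodule.mul_induction_on hx ?_ ?_
      · intro y hy z hz
        have : ((y * z : invAlg r w) : MvPolynomial σ ℂ) = ↑y * ↑z := rfl
        rw [this]
        exact monSpan_mul (ih hy) (mem_monSpan_of_maxIdl hr hz)
      · intro y z hy hz
        have h3 : ((y + z : invAlg r w) : MvPolynomial σ ℂ) = ↑y + ↑z := rfl
        rw [h3]
        exact Submodule.add_mem _ hy hz

theorem hsf_eq_card (r : ℕ) (hr : 2 ≤ r) (w : σ → ℕ) (n : ℕ) (B : Finset (σ →₀ ℕ))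
    (hB : ∀ d, d ∈ B ↔ ((r : ℕ) ∣ wt w d ∧ ¬ SumN r w n d)) :
    hsf r w n = B.card := by
  classical
  set I : Ideal (invAlg r w) := (maxIdl r w) ^ n with hI
  let mk := Ideal.Quotient.mkₐ ℂ I
  let el : {d // d ∈ B} → invAlg r w := fun d => qmono hr ((hB d.1).mp d.2).1
  let v : {d // d ∈ B} → ((↥(invAlg r w)) ⧸ I) := fun d => mk (el d)
  have hel : ∀ d : {d // d ∈ B}, (el d : MvPolynomial σ ℂ) = monomial d.1 1 := fun d => rfl
  have hli : LinearIndependent ℂ v := by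
    rw [linearIndependent_iff]
    intro l hl
    have h0 : Finsupp.linearCombination ℂ v l = mk.toLinearMap (Finsupp.linearCombination ℂ el l) := by
      rw [Finsupp.apply_linearCombination]
      rfl
    have h1 : Finsupp.linearCombination ℂ el l ∈ I := by
      rw [h0] at hl
      have : Ideal.Quotient.mk I (Finsupp.linearCombination ℂ el l) = 0 := by
        rw [← hl]; rfl
      exact (Ideal.Quotient.eq_zero_iff_mem).mp this
    have h2 : ((Finsupp.linearCombination ℂ el l : invAlg r w) : MvPolynomial σ ℂ)
        ∈ monSpan r w n := pow_subset_monSpan hr h1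
    have h3 : ((Finsupp.linearCombination ℂ el l : invAlg r w) : MvPolynomial σ ℂ)
        = Finsupp.linearCombination ℂ (fun d : {d // d ∈ B} => (monomial d.1 1 : MvPolynomial σ ℂ)) l := by
      rw [show ((Finsupp.linearCombination ℂ el l : invAlg r w) : MvPolynomial σ ℂ)
          = (invAlg r w).val.toLinearMap (Finsupp.linearCombination ℂ el l) from rfl]
      rw [Finsupp.apply_linearCombination]
      rfl
    apply Finsupp.ext
    intro e
    have h4 : coeff e.1 ((Finsupp.linearCombination ℂ el l : invAlg r w) : MvPolynomial σ ℂ) = l e := by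
      rw [h3, Finsupp.linearCombination_apply, Finsupp.sum]
      rw [coeff_sum]
      have : ∀ d ∈ l.support, coeff e.1 (l d • (monomial d.1 1 : MvPolynomial σ ℂ))
          = if d = e then l d else 0 := by
        intro d _
        rw [smul_monomial, smul_eq_mul, mul_one, coeff_monomial]
        by_cases hde : d = e
        · subst hde; simp
        · have : d.1 ≠ e.1 := fun hh => hde (Subtype.ext hh)
          simp [this, hde]
      rw [Finset.sum_congr rfl this, Finset.sum_ite_eq' l.support e (fun d => l d)]
      by_cases he : e ∈ l.support
      · simp [he]
      · simp [he, Finsupp.notMem_support_iff.mp he]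
    rw [← h4]
    simp only [Finsupp.coe_zero, Pi.zero_apply]
    exact coeff_eq_zero_of_mem_monSpan h2 ((hB e.1).mp e.2).2
  have hsp : ⊤ ≤ Submodule.span ℂ (Set.range v) := by
    rintro x -
    obtain ⟨y, rfl⟩ := Ideal.Quotient.mk_surjective (I := I) x
    have hy := (mem_invAlg_iff hr w _).mp y.2
    have hyrep : y = ∑ d ∈ (y : MvPolynomial σ ℂ).support.attach,
        (coeff d.1 (y : MvPolynomial σ ℂ)) • (⟨monomial d.1 1, mono_mem hr (hy d.1 d.2)⟩ : invAlg r w) := by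
      apply Subtype.ext
      rw [AddSubmonoidClass.coe_finset_sum]
      have : ∀ d ∈ (y : MvPolynomial σ ℂ).support.attach,
          ((coeff d.1 (y : MvPolynomial σ ℂ) • (⟨monomial d.1 1, mono_mem hr (hy d.1 d.2)⟩ : invAlg r w) : invAlg r w) : MvPolynomial σ ℂ)
          = monomial d.1 (coeff d.1 (y : MvPolynomial σ ℂ)) := by
        intro d _
        rw [show ((coeff d.1 (y : MvPolynomial σ ℂ) • (⟨monomial d.1 1, mono_mem hr (hy d.1 d.2)⟩ : invAlg r w) : invAlg r w) : MvPolynomial σ ℂ)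
            = coeff d.1 (y : MvPolynomial σ ℂ) • (monomial d.1 1 : MvPolynomial σ ℂ) from rfl]
        rw [smul_monomial, smul_eq_mul, mul_one]
      rw [Finset.sum_congr rfl this]
      rw [Finset.sum_attach ((y : MvPolynomial σ ℂ).support) (fun d => monomial d (coeff d (y : MvPolynomial σ ℂ)))]
      exact (y : MvPolynomial σ ℂ).as_sum
    have : Ideal.Quotient.mk I y = mk y := rfl
    rw [this, hyrep, map_sum]
    apply Submodule.sum_mem
    intro d hd
    rw [map_smul]
    apply Submodule.smul_mem
    by_cases hs : SumN r w n d.1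
    · have : (⟨monomial d.1 1, mono_mem hr (hy d.1 d.2)⟩ : invAlg r w) ∈ I := by
        rw [hI]
        exact qmono_mem_pow hr (hy d.1 d.2) hs
      have h0 : mk (⟨monomial d.1 1, mono_mem hr (hy d.1 d.2)⟩ : invAlg r w) = 0 := by
        show Ideal.Quotient.mk I _ = 0
        exact Ideal.Quotient.eq_zero_iff_mem.mpr this
      rw [h0]
      exact Submodule.zero_mem _
    · have hmem : d.1 ∈ B := (hB d.1).mpr ⟨hy d.1 d.2, hs⟩
      apply Submodule.subset_span
      exact ⟨⟨d.1, hmem⟩, rfl⟩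
  let bas : Module.Basis {d // d ∈ B} ℂ ((↥(invAlg r w)) ⧸ I) := Module.Basis.mk hli hsp
  rw [hsf, ← hI, Module.finrank_eq_card_basis bas, Fintype.card_coe]



/-- 2x2 determinant of integer pairs -/
def Dz (u v : ℤ × ℤ) : ℤ := u.1 * v.2 - u.2 * v.1

/-- The chain of boundary lattice generators of the invariant monoid
`{(i,k) : r ∣ a i + k}`. -/
structure Chain (r a : ℕ) where
  N : ℕ
  g : ℕ → ℕ × ℕ
  hg0 : g 0 = (0, r)
  hg1 : g 1 = (1, r - a)
  hglast : g (N+1) = (r, 0)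
  hx : ∀ t, t ≤ N → (g t).1 < (g (t+1)).1
  hy : ∀ t, t ≤ N → (g (t+1)).2 < (g t).2
  hdet : ∀ t, t ≤ N → ((g t).1 : ℤ) * ((g (t+1)).2 : ℤ) - ((g t).2 : ℤ) * ((g (t+1)).1 : ℤ) = -(r:ℤ)
  hcong : ∀ t, t ≤ N+1 → (r : ℕ) ∣ a * (g t).1 + (g t).2
  hD : ∀ p q, p < q → q ≤ N+1 →
    ((g p).1 : ℤ) * ((g q).2 : ℤ) - ((g p).2 : ℤ) * ((g q).1 : ℤ) ≤ -(r:ℤ)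
  halpha : ∀ t, t ≤ N → ((g t).2 : ℤ) - ((g (t+1)).2 : ℤ) ≤ (r:ℤ) - 1

/-- the step of the continued-fraction iteration -/
def cstep : ((ℤ×ℤ)×(ℤ×ℤ)) → ((ℤ×ℤ)×(ℤ×ℤ)) := fun p =>
  if p.2.2 ≤ 0 then p
  else (p.2, (((p.1.2 + p.2.2 - 1) / p.2.2) * p.2.1 - p.1.1,
              ((p.1.2 + p.2.2 - 1) / p.2.2) * p.2.2 - p.1.2))

def cit (r a : ℕ) (n : ℕ) : (ℤ×ℤ)×(ℤ×ℤ) := cstep^[n] ((0, (r:ℤ)), (1, (r:ℤ) - a))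

def CInv (r a : ℕ) (p : (ℤ×ℤ)×(ℤ×ℤ)) : Prop :=
  0 ≤ p.1.1 ∧ p.1.1 < p.2.1 ∧ 0 ≤ p.2.2 ∧ p.2.2 < p.1.2 ∧
  p.1.1 * p.2.2 - p.1.2 * p.2.1 = -(r:ℤ) ∧
  (r:ℤ) ∣ ((a:ℤ) * p.1.1 + p.1.2) ∧ (r:ℤ) ∣ ((a:ℤ) * p.2.1 + p.2.2)

section build
variable {r a : ℕ}

lemma ceil_facts {u2 v2 : ℤ} (hv : 0 < v2) :
    u2 ≤ ((u2 + v2 - 1) / v2) * v2 ∧ ((u2 + v2 - 1) / v2) * v2 < u2 + v2 := by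
  have h1 := Int.mul_ediv_add_emod (u2 + v2 - 1) v2
  have h2 := Int.emod_nonneg (u2 + v2 - 1) (ne_of_gt hv)
  have h3 := Int.emod_lt_of_pos (u2 + v2 - 1) hv
  constructor <;> nlinarith [h1, h2, h3]

lemma cinv_step {p : (ℤ×ℤ)×(ℤ×ℤ)} (h : CInv r a p) : CInv r a (cstep p) := by
  obtain ⟨h1, h2, h3, h4, h5, h6, h7⟩ := h
  by_cases hz : p.2.2 ≤ 0
  · rw [cstep, if_pos hz]; exact ⟨h1, h2, h3, h4, h5, h6, h7⟩
  · push_neg at hz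
    rw [cstep, if_neg (not_le.mpr hz)]
    obtain ⟨hc1, hc2⟩ := ceil_facts (u2 := p.1.2) hz
    set b := (p.1.2 + p.2.2 - 1) / p.2.2 with hb
    have hb2 : 2 ≤ b := by nlinarith
    refine ⟨by dsimp only; linarith, by dsimp only; nlinarith,
      by dsimp only; linarith, by dsimp only; linarith, ?_, h7, ?_⟩
    · dsimp only
      linear_combination h5
    · dsimp only
      obtain ⟨c1, hc1'⟩ := h6
      obtain ⟨c2, hc2'⟩ := h7
      exact ⟨b * c2 - c1, by linear_combination b * hc2' - hc1'⟩

lemma cinv_cit (ha : 1 ≤ a) (har : a < r) (n : ℕ) : CInv r a (cit r a n) := by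
  induction n with
  | zero =>
      rw [cit, Function.iterate_zero_apply]
      have haz : (a:ℤ) < (r:ℤ) := by exact_mod_cast har
      have haz1 : (1:ℤ) ≤ (a:ℤ) := by exact_mod_cast ha
      refine ⟨le_refl 0, by norm_num, by dsimp only; linarith, by dsimp only; linarith, ?_, ?_, ?_⟩
      · dsimp only; ring
      · dsimp only; exact ⟨1, by ring⟩
      · dsimp only; exact ⟨1, by ring⟩
  | succ n ih =>
      rw [cit, Function.iterate_succ_apply']
      exact cinv_step ih

lemma cit_y_decr (ha : 1 ≤ a) (har : a < r) (n : ℕ) (hpos : 0 < (cit r a n).2.2) :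
    (cit r a (n+1)).2.2 < (cit r a n).2.2 ∧ (cit r a (n+1)).1 = (cit r a n).2 ∧
    ∃ b : ℤ, 2 ≤ b ∧ (cit r a (n+1)).2 = (b * (cit r a n).2.1 - (cit r a n).1.1,
      b * (cit r a n).2.2 - (cit r a n).1.2) := by
  obtain ⟨h1, h2, h3, h4, h5, h6, h7⟩ := cinv_cit ha har n
  have hs : cit r a (n+1) = cstep (cit r a n) := by
    rw [cit, Function.iterate_succ_apply']; rfl
  rw [hs, cstep, if_neg (not_le.mpr hpos)]
  set p := cit r a n
  obtain ⟨hc1, hc2⟩ := ceil_facts (u2 := p.1.2) hpos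
  set b := (p.1.2 + p.2.2 - 1) / p.2.2 with hb
  have hb2 : 2 ≤ b := by nlinarith
  exact ⟨by dsimp only; linarith, rfl, b, hb2, rfl⟩

lemma cit_term (ha : 1 ≤ a) (har : a < r) : ∃ n, (cit r a n).2.2 = 0 := by
  suffices h : ∀ k n, ((cit r a n).2.2).toNat ≤ k → ∃ m, (cit r a m).2.2 = 0 by
    exact h ((cit r a 0).2.2).toNat 0 le_rfl
  intro k
  induction k with
  | zero =>
      intro n hn
      obtain ⟨_, _, h3, _, _, _, _⟩ := cinv_cit ha har n
      exact ⟨n, by omega⟩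
  | succ k ih =>
      intro n hn
      by_cases hz : (cit r a n).2.2 = 0
      · exact ⟨n, hz⟩
      · obtain ⟨_, _, h3, _, _, _, _⟩ := cinv_cit ha har n
        have hpos : 0 < (cit r a n).2.2 := by omega
        obtain ⟨hlt, -, -⟩ := cit_y_decr ha har n hpos
        obtain ⟨_, _, h3', _, _, _, _⟩ := cinv_cit ha har (n+1)
        exact ih (n+1) (by omega)


variable (ha : 1 ≤ a) (har : a < r)

noncomputable def chN : ℕ := Nat.find (cit_term ha har)

lemma chN_y_zero : (cit r a (chN ha har)).2.2 = 0 := Nat.find_spec (cit_term ha har)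

lemma chN_y_pos {n : ℕ} (hn : n < chN ha har) : 0 < (cit r a n).2.2 := by
  obtain ⟨_, _, h3, _, _, _, _⟩ := cinv_cit ha har n
  have := Nat.find_min (cit_term ha har) hn
  omega

noncomputable def gZ : ℕ → ℤ×ℤ := fun t =>
  if t ≤ chN ha har then (cit r a t).1 else (cit r a (chN ha har)).2

lemma gZ_pair {t : ℕ} (ht : t ≤ chN ha har) :
    gZ ha har t = (cit r a t).1 ∧ gZ ha har (t+1) = (cit r a t).2 := by
  constructor
  · rw [gZ, if_pos ht]
  · by_cases h : t + 1 ≤ chN ha har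
    · rw [gZ, if_pos h]
      have hpos : 0 < (cit r a t).2.2 := chN_y_pos ha har (by omega)
      obtain ⟨-, heq, -⟩ := cit_y_decr ha har t hpos
      exact heq
    · have : t = chN ha har := by omega
      rw [gZ, if_neg h, this]

lemma gZ_inv {t : ℕ} (ht : t ≤ chN ha har) :
    CInv r a (gZ ha har t, gZ ha har (t+1)) := by
  obtain ⟨h1, h2⟩ := gZ_pair ha har ht
  rw [h1, h2]
  exact cinv_cit ha har t

lemma gZ_rec {t : ℕ} (ht1 : 1 ≤ t) (ht : t ≤ chN ha har) :
    ∃ b : ℤ, 2 ≤ b ∧ gZ ha har (t+1) =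
      (b * (gZ ha har t).1 - (gZ ha har (t-1)).1,
       b * (gZ ha har t).2 - (gZ ha har (t-1)).2) := by
  have hpos : 0 < (cit r a (t-1)).2.2 := chN_y_pos ha har (by omega)
  obtain ⟨-, -, b, hb2, heq⟩ := cit_y_decr ha har (t-1) hpos
  have hts : t - 1 + 1 = t := by omega
  obtain ⟨hp1, hp2⟩ := gZ_pair ha har (t := t - 1) (by omega)
  obtain ⟨hq1, hq2⟩ := gZ_pair ha har (t := t) ht
  rw [hts] at hp2 heq
  refine ⟨b, hb2, ?_⟩
  rw [hq2, hp1, hp2]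
  exact heq

lemma gZ_det {t : ℕ} (ht : t ≤ chN ha har) :
    Dz (gZ ha har t) (gZ ha har (t+1)) = -(r:ℤ) := by
  obtain ⟨-, -, -, -, h5, -, -⟩ := gZ_inv ha har ht
  exact h5

lemma gZ_D {p q : ℕ} (hpq : p < q) (hq : q ≤ chN ha har + 1) :
    Dz (gZ ha har p) (gZ ha har q) ≤ Dz (gZ ha har p) (gZ ha har (q-1)) - r ∧
    Dz (gZ ha har p) (gZ ha har q) ≤ -(r:ℤ) := by
  induction q with
  | zero => omega
  | succ q ih =>
      by_cases hq1 : q = p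
      · subst hq1
        have h := gZ_det ha har (t := q) (by omega)
        have h0 : Dz (gZ ha har q) (gZ ha har q) = 0 := by unfold Dz; ring
        have hrpos : (0:ℤ) < (r:ℤ) := by
          exact_mod_cast lt_of_le_of_lt (Nat.zero_le a) har
        constructor
        · simp only [Nat.add_sub_cancel]
          rw [h, h0]
          linarith
        · rw [h]
      · have hq2 : p < q := by omega
        obtain ⟨ih1, ih2⟩ := ih hq2 (by omega)
        obtain ⟨b, hb2, hrec⟩ := gZ_rec ha har (t := q) (by omega) (by omega)
        have hlin : Dz (gZ ha har p) (gZ ha har (q+1)) =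
            b * Dz (gZ ha har p) (gZ ha har q) - Dz (gZ ha har p) (gZ ha har (q-1)) := by
          rw [hrec]; unfold Dz; dsimp only; ring
        have hb' : b * Dz (gZ ha har p) (gZ ha har q) ≤ 2 * Dz (gZ ha har p) (gZ ha har q) := by
          nlinarith
        constructor
        · simp only [Nat.add_sub_cancel]
          linarith
        · linarith

lemma gZ_ymono {t t' : ℕ} (h : t ≤ t') (ht' : t' ≤ chN ha har + 1) :
    (gZ ha har t').2 ≤ (gZ ha har t).2 := by
  induction t' with
  | zero =>
      have : t = 0 := by omega
      rw [this]
  | succ t' ih =>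
      by_cases he : t = t' + 1
      · rw [he]
      · have h1 : t ≤ t' := by omega
        have h2 : t' ≤ chN ha har + 1 := by omega
        obtain ⟨-, -, -, h4, -, -, -⟩ := gZ_inv ha har (t := t') (by omega)
        have := ih h1 h2
        dsimp only at h4
        linarith

lemma gZ_last (hco : Nat.gcd a r = 1) : gZ ha har (chN ha har + 1) = ((r:ℤ), 0) := by
  obtain ⟨hp1, hp2⟩ := gZ_pair ha har (t := chN ha har) le_rfl
  have hy0 : (cit r a (chN ha har)).2.2 = 0 := chN_y_zero ha har
  obtain ⟨h1, h2, h3, h4, h5, h6, h7⟩ := cinv_cit ha har (chN ha har)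
  set u := (cit r a (chN ha har)).1
  set v := (cit r a (chN ha har)).2
  have hco2 : IsCoprime (r:ℤ) (a:ℤ) := by
    rw [Int.isCoprime_iff_gcd_eq_one, Int.gcd_natCast_natCast, Nat.gcd_comm]
    exact hco
  have hdvd : (r:ℤ) ∣ v.1 := by
    apply hco2.dvd_of_dvd_mul_right
    have : (a:ℤ) * v.1 + v.2 = v.1 * a := by rw [hy0]; ring
    rw [← this]
    exact h7
  obtain ⟨c, hc⟩ := hdvd
  have hrpos : (0:ℤ) < (r:ℤ) := by
    exact_mod_cast lt_of_le_of_lt (Nat.zero_le a) har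
  have h5' : u.2 * v.1 = r := by rw [hy0] at h5; linarith
  have hc1 : u.2 * c = 1 := by
    have h5'' : u.2 * ((r:ℤ) * c) = r := by rw [← hc]; exact h5'
    have : (r:ℤ) * (u.2 * c) = r * 1 := by linear_combination h5''
    exact mul_left_cancel₀ (ne_of_gt hrpos) this
  have hu2pos : 1 ≤ u.2 := by omega
  have hv1pos : 1 ≤ v.1 := by omega
  have hcpos : 1 ≤ c := by nlinarith
  have hu2 : u.2 = 1 := by nlinarith
  have hv1 : v.1 = r := by
    rw [hc, hu2] at h5'
    linarith
  rw [hp2]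
  have : v = (v.1, v.2) := rfl
  rw [this, hv1, hy0]

lemma gZ_nonneg {t : ℕ} (ht : t ≤ chN ha har + 1) :
    0 ≤ (gZ ha har t).1 ∧ 0 ≤ (gZ ha har t).2 := by
  by_cases h : t ≤ chN ha har
  · obtain ⟨h1, h2, h3, h4, h5, h6, h7⟩ := gZ_inv ha har h
    dsimp only at h1 h2 h3 h4
    exact ⟨h1, by linarith⟩
  · have ht' : t = chN ha har + 1 := by omega
    subst ht'
    obtain ⟨hp1, hp2⟩ := gZ_pair ha har (t := chN ha har) le_rfl
    obtain ⟨h1, h2, h3, h4, h5, h6, h7⟩ := cinv_cit ha har (chN ha har)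
    rw [hp2]
    exact ⟨by linarith, h3⟩

lemma chain_exists (hr : 2 ≤ r) (ha : 1 ≤ a) (har : a < r) (hco : Nat.gcd a r = 1) : Nonempty (Chain r a) := by
  set NN := chN ha har with hNN
  set G : ℕ → ℕ × ℕ := fun t => (((gZ ha har t).1).toNat, ((gZ ha har t).2).toNat) with hG
  have hcast : ∀ t, t ≤ NN + 1 → ((G t).1 : ℤ) = (gZ ha har t).1 ∧
      ((G t).2 : ℤ) = (gZ ha har t).2 := by
    intro t ht
    obtain ⟨h1, h2⟩ := gZ_nonneg ha har ht
    exact ⟨Int.toNat_of_nonneg h1, Int.toNat_of_nonneg h2⟩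
  have hg0Z : gZ ha har 0 = ((0:ℤ), (r:ℤ)) := (gZ_pair ha har (Nat.zero_le _)).1
  have hg1Z : gZ ha har 1 = ((1:ℤ), (r:ℤ) - (a:ℤ)) := (gZ_pair ha har (Nat.zero_le _)).2
  have hglastZ : gZ ha har (NN + 1) = ((r:ℤ), 0) := gZ_last ha har hco
  refine ⟨⟨NN, G, ?_, ?_, ?_, ?_, ?_, ?_, ?_, ?_, ?_⟩⟩
  · -- hg0
    rw [hG]; dsimp only; rw [hg0Z]; simp
  · -- hg1
    rw [hG]; dsimp only; rw [hg1Z]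
    have : (r:ℤ) - (a:ℤ) = ((r - a : ℕ) : ℤ) := by
      rw [Nat.cast_sub (le_of_lt har)]
    rw [this]
    simp
  · -- hglast
    rw [hG]; dsimp only; rw [hglastZ]; simp
  · -- hx
    intro t ht
    obtain ⟨h1, h2, h3, h4, h5, h6, h7⟩ := gZ_inv ha har ht
    dsimp only at h2
    obtain ⟨c1, -⟩ := hcast t (by omega)
    obtain ⟨c2, -⟩ := hcast (t+1) (by omega)
    have : ((G t).1 : ℤ) < ((G (t+1)).1 : ℤ) := by rw [c1, c2]; exact h2
    exact_mod_cast this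
  · -- hy
    intro t ht
    obtain ⟨h1, h2, h3, h4, h5, h6, h7⟩ := gZ_inv ha har ht
    dsimp only at h4
    obtain ⟨-, c1⟩ := hcast t (by omega)
    obtain ⟨-, c2⟩ := hcast (t+1) (by omega)
    have : ((G (t+1)).2 : ℤ) < ((G t).2 : ℤ) := by rw [c1, c2]; exact h4
    exact_mod_cast this
  · -- hdet
    intro t ht
    obtain ⟨h1, h2, h3, h4, h5, h6, h7⟩ := gZ_inv ha har ht
    dsimp only at h5
    obtain ⟨c1, c2⟩ := hcast t (by omega)
    obtain ⟨c3, c4⟩ := hcast (t+1) (by omega)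
    rw [c1, c2, c3, c4]
    exact h5
  · -- hcong
    intro t ht
    by_cases h : t ≤ NN
    · obtain ⟨h1, h2, h3, h4, h5, h6, h7⟩ := gZ_inv ha har h
      dsimp only at h6
      obtain ⟨c1, c2⟩ := hcast t (by omega)
      have : (r:ℤ) ∣ ((a * (G t).1 + (G t).2 : ℕ) : ℤ) := by
        push_cast
        rw [c1, c2]
        exact h6
      exact_mod_cast this
    · have ht' : t = NN + 1 := by omega
      subst ht'
      obtain ⟨c1, c2⟩ := hcast (NN+1) le_rfl
      have : (r:ℤ) ∣ ((a * (G (NN+1)).1 + (G (NN+1)).2 : ℕ) : ℤ) := by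
        push_cast
        rw [c1, c2, hglastZ]
        exact ⟨a, by dsimp only; ring⟩
      exact_mod_cast this
  · -- hD
    intro p q hpq hq
    obtain ⟨-, hD2⟩ := gZ_D ha har hpq hq
    obtain ⟨c1, c2⟩ := hcast p (by omega)
    obtain ⟨c3, c4⟩ := hcast q (by omega)
    rw [c1, c2, c3, c4]
    exact hD2
  · -- halpha
    intro t ht
    have haz : (a:ℤ) < (r:ℤ) := by exact_mod_cast har
    have haz1 : (1:ℤ) ≤ (a:ℤ) := by exact_mod_cast ha
    obtain ⟨c1, c2⟩ := hcast t (by omega)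
    obtain ⟨c3, c4⟩ := hcast (t+1) (by omega)
    rw [c2, c4]
    by_cases h0 : t = 0
    · subst h0
      rw [hg0Z, hg1Z]
      dsimp only
      linarith
    · have h1t : 1 ≤ t := by omega
      have hm : (gZ ha har t).2 ≤ (gZ ha har 1).2 := gZ_ymono ha har h1t (by omega)
      rw [hg1Z] at hm
      dsimp only at hm
      obtain ⟨-, hnn⟩ := gZ_nonneg ha har (t := t+1) (by omega)
      linarith

end build





def Sig2 (r a : ℕ) (p : ℕ × ℕ) : Prop := r ∣ a * p.1 + p.2

def SumP (r a n : ℕ) (p : ℕ × ℕ) : Prop :=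
  ∃ l : Multiset (ℕ × ℕ), n ≤ Multiset.card l ∧ (∀ q ∈ l, Sig2 r a q ∧ q ≠ 0) ∧ l.sum = p

lemma sumP_mono {r a n m : ℕ} {p : ℕ × ℕ} (h : SumP r a n p) (hm : m ≤ n) :
    SumP r a m p := by
  obtain ⟨l, h1, h2, h3⟩ := h; exact ⟨l, le_trans hm h1, h2, h3⟩

variable {r a : ℕ}

/-- the parametrization of the invariant monoid by sectors -/
def chphi (C : Chain r a) (z : ℕ × ℕ × ℕ) : ℕ × ℕ :=
  (z.2.1 * (C.g z.1).1 + z.2.2 * (C.g (z.1+1)).1,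
   z.2.1 * (C.g z.1).2 + z.2.2 * (C.g (z.1+1)).2)

section chainfacts
variable (C : Chain r a)

lemma chain_x_lt {p q : ℕ} (h : p < q) (hq : q ≤ C.N + 1) : (C.g p).1 < (C.g q).1 := by
  induction q with
  | zero => omega
  | succ q ih =>
      by_cases hpq : p = q
      · subst hpq; exact C.hx p (by omega)
      · exact lt_trans (ih (by omega) (by omega)) (C.hx q (by omega))

lemma chain_y_lt {p q : ℕ} (h : p < q) (hq : q ≤ C.N + 1) : (C.g q).2 < (C.g p).2 := by
  induction q with
  | zero => omega
  | succ q ih =>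
      by_cases hpq : p = q
      · subst hpq; exact C.hy p (by omega)
      · exact lt_trans (C.hy q (by omega)) (ih (by omega) (by omega))

lemma chain_y_pos {t : ℕ} (ht : t ≤ C.N) : 0 < (C.g t).2 := by
  have h := chain_y_lt C (p := t) (q := C.N + 1) (by omega) le_rfl
  rw [C.hglast] at h
  exact h

lemma chain_x_pos {t : ℕ} (ht : 1 ≤ t) (ht2 : t ≤ C.N + 1) : 0 < (C.g t).1 := by
  have h0 : (C.g 0).1 = 0 := by rw [C.hg0]
  by_cases h : t = 0
  · omega
  · have := chain_x_lt C (p := 0) (q := t) (by omega) ht2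
    omega

lemma chain_g_ne_zero {t : ℕ} (ht : t ≤ C.N + 1) : C.g t ≠ 0 := by
  intro h0
  by_cases h : t ≤ C.N
  · have := chain_y_pos C h
    rw [h0] at this
    simp at this
  · have := chain_x_pos C (t := t) (by omega) ht
    rw [h0] at this
    simp at this

/-- `E p q` is the determinant `x_p y_q - y_p x_q`. -/
def chE (p q : ℕ) : ℤ := ((C.g p).1 : ℤ) * ((C.g q).2 : ℤ) - ((C.g p).2 : ℤ) * ((C.g q).1 : ℤ)

lemma chE_self (t : ℕ) : chE C t t = 0 := by unfold chE; ring

lemma chE_nonpos {p q : ℕ} (h : p ≤ q) (hq : q ≤ C.N + 1) : chE C p q ≤ 0 := by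
  by_cases hpq : p = q
  · subst hpq; rw [chE_self]
  · have := C.hD p q (by omega) hq
    unfold chE
    have hrnn : (0:ℤ) ≤ (r:ℤ) := by positivity
    linarith

/-- `Dg t p = x_t p₂ - y_t p₁`. -/
def Dg (t : ℕ) (p : ℕ × ℕ) : ℤ := ((C.g t).1 : ℤ) * (p.2 : ℤ) - ((C.g t).2 : ℤ) * (p.1 : ℤ)

lemma Dg_dvd {t : ℕ} (ht : t ≤ C.N + 1) {p : ℕ × ℕ} (hp : Sig2 r a p) :
    (r:ℤ) ∣ Dg C t p := by
  have h1 : (r:ℤ) ∣ ((a * p.1 + p.2 : ℕ) : ℤ) := Int.natCast_dvd_natCast.mpr hp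
  have h2 : (r:ℤ) ∣ ((a * (C.g t).1 + (C.g t).2 : ℕ) : ℤ) :=
    Int.natCast_dvd_natCast.mpr (C.hcong t ht)
  have key : Dg C t p = ((C.g t).1 : ℤ) * ((a * p.1 + p.2 : ℕ) : ℤ)
      - (p.1 : ℤ) * ((a * (C.g t).1 + (C.g t).2 : ℕ) : ℤ) := by
    unfold Dg; push_cast; ring
  rw [key]
  exact dvd_sub (Dvd.dvd.mul_left h1 _) (Dvd.dvd.mul_left h2 _)

lemma Dg_phi_self {t : ℕ} (ht : t ≤ C.N) (lam mu : ℕ) :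
    Dg C t (chphi C (t, lam, mu)) = -(mu : ℤ) * r := by
  have hd := C.hdet t ht
  unfold Dg chphi
  push_cast
  linear_combination (mu : ℤ) * hd

lemma Dg_phi_next {t : ℕ} (ht : t ≤ C.N) (lam mu : ℕ) :
    Dg C (t+1) (chphi C (t, lam, mu)) = (lam : ℤ) * r := by
  have hd := C.hdet t ht
  unfold Dg chphi
  push_cast
  linear_combination -(lam : ℤ) * hd

lemma Dg_g (t s : ℕ) : Dg C t (C.g s) = - chE C s t := by
  unfold Dg chE; ring

lemma Dg_phi {t' t : ℕ} (lam mu : ℕ) :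
    Dg C t' (chphi C (t, lam, mu)) = -(lam : ℤ) * chE C t t' - (mu : ℤ) * chE C (t+1) t' := by
  unfold Dg chphi chE
  push_cast
  ring

end chainfacts

section ell
variable (C : Chain r a)

/-- the supporting linear functional of the `t`-th edge -/
def ell (t : ℕ) (p : ℕ × ℕ) : ℤ :=
  (((C.g t).2 : ℤ) - ((C.g (t+1)).2 : ℤ)) * (p.1 : ℤ)
    + (((C.g (t+1)).1 : ℤ) - ((C.g t).1 : ℤ)) * (p.2 : ℤ)

lemma ell_g_self {t : ℕ} (ht : t ≤ C.N) : ell C t (C.g t) = r := by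
  have hd := C.hdet t ht
  unfold ell
  linear_combination -hd

lemma ell_g_next {t : ℕ} (ht : t ≤ C.N) : ell C t (C.g (t+1)) = r := by
  have hd := C.hdet t ht
  unfold ell
  linear_combination -hd

lemma ell_dvd {t : ℕ} (ht : t ≤ C.N) {p : ℕ × ℕ} (hp : Sig2 r a p) :
    (r:ℤ) ∣ ell C t p := by
  have h1 : (r:ℤ) ∣ ((a * p.1 + p.2 : ℕ) : ℤ) := Int.natCast_dvd_natCast.mpr hp
  have h2 : (r:ℤ) ∣ ((a * (C.g t).1 + (C.g t).2 : ℕ) : ℤ) :=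
    Int.natCast_dvd_natCast.mpr (C.hcong t (by omega))
  have h3 : (r:ℤ) ∣ ((a * (C.g (t+1)).1 + (C.g (t+1)).2 : ℕ) : ℤ) :=
    Int.natCast_dvd_natCast.mpr (C.hcong (t+1) (by omega))
  have key : ell C t p = (((C.g (t+1)).1 : ℤ) - ((C.g t).1 : ℤ)) * ((a * p.1 + p.2 : ℕ) : ℤ)
      + (p.1 : ℤ) * (((a * (C.g t).1 + (C.g t).2 : ℕ) : ℤ) - ((a * (C.g (t+1)).1 + (C.g (t+1)).2 : ℕ) : ℤ)) := by
    unfold ell; push_cast; ring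
  rw [key]
  exact dvd_add (Dvd.dvd.mul_left h1 _) (Dvd.dvd.mul_left (dvd_sub h2 h3) _)

lemma ell_pos {t : ℕ} (ht : t ≤ C.N) {p : ℕ × ℕ} (hp : p ≠ 0) : 1 ≤ ell C t p := by
  have hA : (1:ℤ) ≤ ((C.g t).2 : ℤ) - ((C.g (t+1)).2 : ℤ) := by
    have := C.hy t ht; omega
  have hB : (1:ℤ) ≤ ((C.g (t+1)).1 : ℤ) - ((C.g t).1 : ℤ) := by
    have := C.hx t ht; omega
  have hp' : 1 ≤ p.1 + p.2 := by
    rcases Nat.eq_zero_or_pos (p.1 + p.2) with h | h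
    · exfalso; apply hp; have : p.1 = 0 ∧ p.2 = 0 := by omega
      exact Prod.ext this.1 this.2
    · omega
  have h1 : (0:ℤ) ≤ (p.1 : ℤ) := by positivity
  have h2 : (0:ℤ) ≤ (p.2 : ℤ) := by positivity
  have h3 : (1:ℤ) ≤ (p.1 : ℤ) + (p.2 : ℤ) := by exact_mod_cast hp'
  unfold ell
  nlinarith

lemma ell_ge_r {t : ℕ} (ht : t ≤ C.N) {p : ℕ × ℕ} (hs : Sig2 r a p) (hp : p ≠ 0) :
    (r:ℤ) ≤ ell C t p :=
  Int.le_of_dvd (lt_of_lt_of_le zero_lt_one (ell_pos C ht hp)) (ell_dvd C ht hs)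

lemma ell_sum {t : ℕ} (l : Multiset (ℕ × ℕ)) :
    ell C t l.sum = (l.map (ell C t)).sum := by
  induction l using Multiset.induction with
  | empty => simp [ell]
  | cons q l ih =>
      simp only [Multiset.sum_cons, Multiset.map_cons]
      rw [← ih]
      unfold ell
      simp only [Prod.fst_add, Prod.snd_add]
      push_cast
      ring

lemma ell_sum_ge {t : ℕ} (ht : t ≤ C.N) (l : Multiset (ℕ × ℕ))
    (hl : ∀ q ∈ l, Sig2 r a q ∧ q ≠ 0) :
    (Multiset.card l : ℤ) * r ≤ ell C t l.sum := by
  rw [ell_sum]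
  induction l using Multiset.induction with
  | empty => simp
  | cons q l ih =>
      simp only [Multiset.map_cons, Multiset.sum_cons, Multiset.card_cons]
      have h1 := ell_ge_r C ht (hl q (Multiset.mem_cons_self q l)).1 (hl q (Multiset.mem_cons_self q l)).2
      have h2 := ih (fun q hq => hl q (Multiset.mem_cons_of_mem hq))
      push_cast
      push_cast at h2
      linarith

lemma ell_phi {t : ℕ} (ht : t ≤ C.N) (lam mu : ℕ) :
    ell C t (chphi C (t, lam, mu)) = ((lam : ℤ) + mu) * r := by
  have h1 := ell_g_self C ht
  have h2 := ell_g_next C ht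
  unfold ell at *
  unfold chphi
  push_cast
  linear_combination (lam : ℤ) * h1 + (mu : ℤ) * h2

end ell

section sump
variable (C : Chain r a)

lemma sig2_phi {t : ℕ} (ht : t ≤ C.N) (lam mu : ℕ) : Sig2 r a (chphi C (t, lam, mu)) := by
  unfold Sig2 chphi
  have key : a * (lam * (C.g t).1 + mu * (C.g (t+1)).1) + (lam * (C.g t).2 + mu * (C.g (t+1)).2)
      = lam * (a * (C.g t).1 + (C.g t).2) + mu * (a * (C.g (t+1)).1 + (C.g (t+1)).2) := by ring
  rw [key]
  exact dvd_add (Dvd.dvd.mul_left (C.hcong t (by omega)) _)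
    (Dvd.dvd.mul_left (C.hcong (t+1) (by omega)) _)

lemma sumP_upper {t : ℕ} (ht : t ≤ C.N) {lam mu n : ℕ}
    (h : SumP r a n (chphi C (t, lam, mu))) (hr : 2 ≤ r) : n ≤ lam + mu := by
  obtain ⟨l, hc, hmem, hsum⟩ := h
  have h1 := ell_sum_ge C ht l hmem
  rw [hsum, ell_phi C ht] at h1
  have hrpos : (0:ℤ) < (r:ℤ) := by exact_mod_cast (by omega : 0 < r)
  have hcz : (n:ℤ) ≤ (Multiset.card l : ℤ) := by exact_mod_cast hc
  have : (n : ℤ) ≤ (lam : ℤ) + mu := by nlinarith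
  exact_mod_cast this

lemma sumP_lower {t : ℕ} (ht : t ≤ C.N) (lam mu : ℕ) :
    SumP r a (lam + mu) (chphi C (t, lam, mu)) := by
  refine ⟨Multiset.replicate lam (C.g t) + Multiset.replicate mu (C.g (t+1)), ?_, ?_, ?_⟩
  · simp
  · intro q hq
    rcases Multiset.mem_add.mp hq with h | h
    · rw [Multiset.eq_of_mem_replicate h]
      exact ⟨by have := C.hcong t (by omega); exact this, chain_g_ne_zero C (by omega)⟩
    · rw [Multiset.eq_of_mem_replicate h]
      exact ⟨by have := C.hcong (t+1) (by omega); exact this, chain_g_ne_zero C (by omega)⟩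
  · rw [Multiset.sum_add, Multiset.sum_replicate, Multiset.sum_replicate]
    apply Prod.ext
    · simp [chphi, smul_eq_mul]
    · simp [chphi, smul_eq_mul]

lemma rep_exists (hr : 2 ≤ r) (hco : Nat.gcd a r = 1) {p : ℕ × ℕ} (hp : Sig2 r a p) :
    ∃ t lam mu : ℕ, t ≤ C.N ∧ p = chphi C (t, lam, mu) ∧
      (1 ≤ lam ∨ (t = C.N ∧ lam = 0)) := by
  classical
  set P : ℕ → Prop := fun t => Dg C t p ≤ 0 with hP
  have hP0 : P 0 := by
    show Dg C 0 p ≤ 0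
    unfold Dg
    rw [C.hg0]
    dsimp only
    push_cast
    nlinarith [Nat.cast_nonneg (α := ℤ) p.1, Nat.cast_nonneg (α := ℤ) r]
  set T := Nat.findGreatest P (C.N + 1) with hT
  have hPT : P T := Nat.findGreatest_spec (Nat.zero_le _) hP0
  have hTle : T ≤ C.N + 1 := Nat.findGreatest_le _
  by_cases hTN : T = C.N + 1
  · -- pure multiple of the last generator
    have h1 : Dg C (C.N + 1) p ≤ 0 := by rw [← hTN]; exact hPT
    unfold Dg at h1
    rw [C.hglast] at h1
    dsimp only at h1
    have hrpos : 0 < r := by omega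
    have hp2 : p.2 = 0 := by
      have : (0:ℤ) ≤ (r:ℤ) * p.2 := by positivity
      have h2 : (r:ℤ) * p.2 ≤ 0 := by push_cast at h1; linarith
      have : (p.2 : ℤ) = 0 := by
        have hrz : (0:ℤ) < (r:ℤ) := by exact_mod_cast hrpos
        nlinarith
      exact_mod_cast this
    have hdvd : r ∣ p.1 := by
      have h3 : r ∣ a * p.1 := by
        have := hp; unfold Sig2 at this; rw [hp2, Nat.add_zero] at this; exact this
      exact (Nat.Coprime.dvd_of_dvd_mul_left (Nat.coprime_comm.mp hco) h3)
    obtain ⟨q, hq⟩ := hdvd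
    refine ⟨C.N, 0, q, le_rfl, ?_, Or.inr ⟨rfl, rfl⟩⟩
    apply Prod.ext
    · show p.1 = 0 * (C.g C.N).1 + q * (C.g (C.N+1)).1
      rw [C.hglast]; dsimp only
      rw [Nat.zero_mul, Nat.zero_add, hq, Nat.mul_comm]
    · show p.2 = 0 * (C.g C.N).2 + q * (C.g (C.N+1)).2
      rw [C.hglast]; dsimp only
      rw [hp2, Nat.zero_mul, Nat.zero_add, Nat.mul_zero]
  · have hTN' : T ≤ C.N := by omega
    have hnext : ¬ P (T + 1) :=
      Nat.findGreatest_is_greatest (n := C.N + 1) (k := T + 1) (by omega) (by omega)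
    have hDpos : 0 < Dg C (T+1) p := lt_of_not_ge (fun hh => hnext hh)
    obtain ⟨c1, hc1⟩ := Dg_dvd C (t := T+1) (by omega) hp
    obtain ⟨c2, hc2⟩ := Dg_dvd C (t := T) (by omega) hp
    have hrpos : (0:ℤ) < (r:ℤ) := by exact_mod_cast (by omega : 0 < r)
    have hc1pos : 1 ≤ c1 := by
      rw [hc1] at hDpos
      nlinarith
    have hc2nonpos : c2 ≤ 0 := by
      have := hPT
      rw [hP] at this
      rw [hc2] at this
      nlinarith
    have hd := C.hdet T hTN'
    have key1 : (r:ℤ) * p.1 = Dg C (T+1) p * ((C.g T).1 : ℤ) - Dg C T p * ((C.g (T+1)).1 : ℤ) := by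
      unfold Dg
      linear_combination (p.1 : ℤ) * hd
    have key2 : (r:ℤ) * p.2 = Dg C (T+1) p * ((C.g T).2 : ℤ) - Dg C T p * ((C.g (T+1)).2 : ℤ) := by
      unfold Dg
      linear_combination (p.2 : ℤ) * hd
    refine ⟨T, c1.toNat, (-c2).toNat, hTN', ?_, Or.inl (by omega)⟩
    have hc1' : (c1.toNat : ℤ) = c1 := Int.toNat_of_nonneg (by omega)
    have hc2' : ((-c2).toNat : ℤ) = -c2 := Int.toNat_of_nonneg (by omega)
    rw [hc1, hc2] at key1 key2
    apply Prod.ext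
    · show p.1 = c1.toNat * (C.g T).1 + (-c2).toNat * (C.g (T+1)).1
      have hz : (p.1 : ℤ) = (c1.toNat : ℤ) * (C.g T).1 + ((-c2).toNat : ℤ) * (C.g (T+1)).1 := by
        rw [hc1', hc2']
        have h9 : (r:ℤ) * (p.1 : ℤ)
            = (r:ℤ) * (c1 * ((C.g T).1 : ℤ) + (-c2) * ((C.g (T+1)).1 : ℤ)) := by
          linear_combination key1
        exact mul_left_cancel₀ (ne_of_gt hrpos) h9
      exact_mod_cast hz
    · show p.2 = c1.toNat * (C.g T).2 + (-c2).toNat * (C.g (T+1)).2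
      have hz : (p.2 : ℤ) = (c1.toNat : ℤ) * (C.g T).2 + ((-c2).toNat : ℤ) * (C.g (T+1)).2 := by
        rw [hc1', hc2']
        have h9 : (r:ℤ) * (p.2 : ℤ)
            = (r:ℤ) * (c1 * ((C.g T).2 : ℤ) + (-c2) * ((C.g (T+1)).2 : ℤ)) := by
          linear_combination key2
        exact mul_left_cancel₀ (ne_of_gt hrpos) h9
      exact_mod_cast hz

end sump

section count
variable (C : Chain r a)

def Ppairs (n : ℕ) : Finset (ℕ × ℕ) :=
  (Finset.range n).biUnion (fun s => (Finset.HasAntidiagonal.antidiagonal s).filter (fun y => 1 ≤ y.1))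

lemma mem_Ppairs {n : ℕ} {y : ℕ × ℕ} : y ∈ Ppairs n ↔ 1 ≤ y.1 ∧ y.1 + y.2 < n := by
  simp only [Ppairs, Finset.mem_biUnion, Finset.mem_range, Finset.mem_filter,
    Finset.HasAntidiagonal.mem_antidiagonal]
  constructor
  · rintro ⟨s, hs, h1, h2⟩
    omega
  · intro ⟨h1, h2⟩
    exact ⟨y.1 + y.2, h2, rfl, h1⟩

lemma Ppairs_card (n : ℕ) : 2 * (Ppairs n).card = n * (n - 1) := by
  rw [Ppairs, Finset.card_biUnion]
  · have hcard : ∀ s ∈ Finset.range n,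
        ((Finset.HasAntidiagonal.antidiagonal s).filter (fun y => 1 ≤ y.1)).card = s := by
      intro s _
      have hneg : ((Finset.HasAntidiagonal.antidiagonal s).filter (fun y => ¬ 1 ≤ y.1)) = {(0, s)} := by
        ext z
        simp only [Finset.mem_filter, Finset.HasAntidiagonal.mem_antidiagonal, Finset.mem_singleton]
        constructor
        · rintro ⟨h1, h2⟩
          have hz1 : z.1 = 0 := by omega
          have hz2 : z.2 = s := by omega
          exact Prod.ext hz1 hz2
        · rintro rfl
          simp
      have h := Finset.card_filter_add_card_filter_not
        (s := Finset.HasAntidiagonal.antidiagonal s) (p := fun y => 1 ≤ y.1)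
      rw [hneg, Finset.card_singleton, Finset.Nat.card_antidiagonal] at h
      omega
    rw [Finset.sum_congr rfl hcard, Nat.mul_comm, Finset.sum_range_id_mul_two]
  · intro s _ t _ hst
    rw [Function.onFun, Finset.disjoint_left]
    intro z hz1 hz2
    simp only [Finset.mem_filter, Finset.HasAntidiagonal.mem_antidiagonal] at hz1 hz2
    omega

def chDom (n : ℕ) : Finset (ℕ × ℕ × ℕ) :=
  ((Finset.range (C.N+1)) ×ˢ Ppairs n) ∪ (Finset.range n).image (fun mu => (C.N, 0, mu))

def chB (n : ℕ) : Finset (ℕ × ℕ) := (chDom C n).image (chphi C)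

lemma mem_chDom {n : ℕ} {z : ℕ × ℕ × ℕ} : z ∈ chDom C n ↔
    ((z.1 ≤ C.N ∧ 1 ≤ z.2.1 ∧ z.2.1 + z.2.2 < n) ∨
     (z.1 = C.N ∧ z.2.1 = 0 ∧ z.2.2 < n)) := by
  rw [chDom, Finset.mem_union, Finset.mem_product, Finset.mem_image]
  rw [mem_Ppairs]
  simp only [Finset.mem_range]
  constructor
  · rintro (⟨h1, h2, h3⟩ | ⟨mu, hmu, heq⟩)
    · exact Or.inl ⟨by omega, h2, h3⟩
    · refine Or.inr ?_
      rw [← heq]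
      exact ⟨rfl, rfl, hmu⟩
  · rintro (⟨h1, h2, h3⟩ | ⟨h1, h2, h3⟩)
    · exact Or.inl ⟨by omega, h2, h3⟩
    · refine Or.inr ⟨z.2.2, h3, ?_⟩
      rw [← h1, ← h2]

lemma chE_nonneg {p q : ℕ} (h : q ≤ p) (hp : p ≤ C.N + 1) : 0 ≤ chE C p q := by
  have h1 := chE_nonpos C h hp
  have h2 : chE C p q = - chE C q p := by unfold chE; ring
  rw [h2]
  linarith

lemma chphi_same_t {t lam mu lam' mu' : ℕ} (hr : 2 ≤ r) (ht : t ≤ C.N)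
    (heq : chphi C (t, lam, mu) = chphi C (t, lam', mu')) : lam = lam' ∧ mu = mu' := by
  have hrpos : (0:ℤ) < (r:ℤ) := by exact_mod_cast (by omega : 0 < r)
  have h1 : -(mu : ℤ) * r = -(mu' : ℤ) * r := by
    rw [← Dg_phi_self C ht lam mu, ← Dg_phi_self C ht lam' mu', heq]
  have h2 : (lam : ℤ) * r = (lam' : ℤ) * r := by
    rw [← Dg_phi_next C ht lam mu, ← Dg_phi_next C ht lam' mu', heq]
  constructor
  · have : (lam : ℤ) = lam' := by
      exact mul_right_cancel₀ (ne_of_gt hrpos) h2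
    exact_mod_cast this
  · have : (mu : ℤ) = mu' := by nlinarith
    exact_mod_cast this

lemma chphi_injOn (hr : 2 ≤ r) (n : ℕ) :
    Set.InjOn (chphi C) (chDom C n : Set (ℕ × ℕ × ℕ)) := by
  have hrpos : (0:ℤ) < (r:ℤ) := by exact_mod_cast (by omega : 0 < r)
  -- key : a sector point with lam ≥ 1 cannot equal a representation from a later edge
  have key : ∀ t lam mu t' lam' mu', t < t' → t' ≤ C.N → 1 ≤ lam → t ≤ C.N →
      chphi C (t, lam, mu) ≠ chphi C (t', lam', mu') := by
    intro t lam mu t' lam' mu' htt' ht' hlam ht heq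
    have h1 : Dg C t' (chphi C (t, lam, mu)) = Dg C t' (chphi C (t', lam', mu')) := by rw [heq]
    rw [Dg_phi_self C ht'] at h1
    rw [Dg_phi C lam mu] at h1
    have hE1 : chE C t t' ≤ -(r:ℤ) := C.hD t t' htt' (by omega)
    have hE2 : chE C (t+1) t' ≤ 0 := chE_nonpos C (by omega) (by omega)
    have hl : (1:ℤ) ≤ (lam:ℤ) := by exact_mod_cast hlam
    nlinarith [Nat.cast_nonneg (α := ℤ) mu', Nat.cast_nonneg (α := ℤ) mu]
  -- key2 : a sector point with lam ≥ 1 cannot equal a pure multiple of the last generator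
  have key2 : ∀ t lam mu mu', t ≤ C.N → 1 ≤ lam →
      chphi C (t, lam, mu) ≠ chphi C (C.N, 0, mu') := by
    intro t lam mu mu' ht hlam heq
    have h1 : Dg C (t+1) (chphi C (t, lam, mu)) = Dg C (t+1) (chphi C (C.N, 0, mu')) := by rw [heq]
    rw [Dg_phi_next C ht] at h1
    rw [Dg_phi C 0 mu'] at h1
    have hE2 : 0 ≤ chE C (C.N+1) (t+1) := chE_nonneg C (by omega) (by omega)
    have hl : (1:ℤ) ≤ (lam:ℤ) := by exact_mod_cast hlam
    push_cast at h1
    nlinarith [Nat.cast_nonneg (α := ℤ) mu', mul_nonneg (Nat.cast_nonneg (α := ℤ) mu') hE2]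
  intro z1 hz1 z2 hz2 heq
  rw [Finset.mem_coe, mem_chDom] at hz1 hz2
  obtain ⟨t1, lam1, mu1⟩ := z1
  obtain ⟨t2, lam2, mu2⟩ := z2
  dsimp only at hz1 hz2
  rcases hz1 with ⟨ha1, hb1, hc1⟩ | ⟨ha1, hb1, hc1⟩ <;>
    rcases hz2 with ⟨ha2, hb2, hc2⟩ | ⟨ha2, hb2, hc2⟩
  · -- both sector
    rcases Nat.lt_trichotomy t1 t2 with h | h | h
    · exact absurd heq (key t1 lam1 mu1 t2 lam2 mu2 h ha2 hb1 ha1)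
    · subst h
      obtain ⟨hl, hm⟩ := chphi_same_t C hr ha1 heq
      rw [hl, hm]
    · exact absurd heq.symm (key t2 lam2 mu2 t1 lam1 mu1 h ha1 hb2 ha2)
  · -- sector = pure
    subst ha2; subst hb2
    exact absurd heq (key2 t1 lam1 mu1 mu2 ha1 hb1)
  · -- pure = sector
    subst ha1; subst hb1
    exact absurd heq.symm (key2 t2 lam2 mu2 mu1 ha2 hb2)
  · -- pure = pure
    subst ha1; subst hb1; subst ha2; subst hb2
    have h1 : mu1 * (C.g (C.N+1)).1 = mu2 * (C.g (C.N+1)).1 := by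
      have := congrArg Prod.fst heq
      unfold chphi at this
      dsimp only at this
      omega
    rw [C.hglast] at h1
    dsimp only at h1
    have : mu1 = mu2 := by
      have hrpos' : 0 < r := by omega
      exact Nat.eq_of_mul_eq_mul_right hrpos' h1
    rw [this]

lemma mem_chB (hr : 2 ≤ r) (hco : Nat.gcd a r = 1) {n : ℕ} {p : ℕ × ℕ} :
    p ∈ chB C n ↔ Sig2 r a p ∧ ¬ SumP r a n p := by
  rw [chB, Finset.mem_image]
  constructor
  · rintro ⟨z, hz, rfl⟩
    rw [mem_chDom] at hz
    obtain ⟨t, lam, mu⟩ := z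
    dsimp only at hz
    rcases hz with ⟨h1, h2, h3⟩ | ⟨h1, h2, h3⟩
    · refine ⟨sig2_phi C h1 lam mu, fun hs => ?_⟩
      have := sumP_upper C h1 hs hr
      omega
    · subst h1; subst h2
      refine ⟨sig2_phi C le_rfl 0 mu, fun hs => ?_⟩
      have := sumP_upper C le_rfl hs hr
      omega
  · rintro ⟨hsig, hns⟩
    obtain ⟨T, lam, mu, hT, hrep, hflag⟩ := rep_exists C hr hco hsig
    have hlow := sumP_lower C hT lam mu
    rw [← hrep] at hlow
    have hlt : lam + mu < n := by
      by_contra hge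
      exact hns (sumP_mono hlow (by omega))
    refine ⟨(T, lam, mu), ?_, hrep.symm⟩
    rw [mem_chDom]
    dsimp only
    rcases hflag with h | ⟨h1, h2⟩
    · exact Or.inl ⟨hT, h, hlt⟩
    · exact Or.inr ⟨h1, h2, by omega⟩

lemma chB_card (hr : 2 ≤ r) (n : ℕ) :
    2 * (chB C n).card = 2 * n + (C.N + 1) * (n * (n - 1)) := by
  rw [chB, Finset.card_image_of_injOn (chphi_injOn C hr n)]
  rw [chDom, Finset.card_union_of_disjoint]
  · rw [Finset.card_product, Finset.card_range]
    rw [Finset.card_image_of_injective _ (fun x y h => by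
      simpa using congrArg (fun z : ℕ × ℕ × ℕ => z.2.2) h)]
    rw [Finset.card_range]
    have := Ppairs_card n
    nlinarith [this]
  · rw [Finset.disjoint_right]
    intro z hz1 hz2
    rw [Finset.mem_image] at hz1
    obtain ⟨mu, -, heq⟩ := hz1
    rw [Finset.mem_product, mem_Ppairs] at hz2
    rw [← heq] at hz2
    simp at hz2

lemma sumP_purez (CC : Chain r a) (hr : 2 ≤ r) (q n : ℕ) : SumP r a n (0, r * q) ↔ n ≤ q := by
  have hform : ((0, r * q) : ℕ × ℕ) = chphi CC (0, q, 0) := by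
    unfold chphi
    rw [CC.hg0]
    dsimp only
    apply Prod.ext <;> dsimp only <;> ring
  rw [hform]
  constructor
  · intro h
    have := sumP_upper CC (Nat.zero_le _) h hr
    omega
  · intro h
    exact sumP_mono (sumP_lower CC (Nat.zero_le _) q 0) (by omega)

end count

-- ===================== the threefold =====================

def Sig3 (r a : ℕ) (p : ℕ × ℕ × ℕ) : Prop := r ∣ a * p.1 + (r - a) * p.2.1 + p.2.2

def SumP3 (r a n : ℕ) (p : ℕ × ℕ × ℕ) : Prop :=
  ∃ l : Multiset (ℕ × ℕ × ℕ), n ≤ Multiset.card l ∧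
    (∀ q ∈ l, Sig3 r a q ∧ q ≠ 0) ∧ l.sum = p

lemma sumP3_mono {r a n m : ℕ} {p : ℕ × ℕ × ℕ} (h : SumP3 r a n p) (hm : m ≤ n) :
    SumP3 r a m p := by
  obtain ⟨l, h1, h2, h3⟩ := h; exact ⟨l, le_trans hm h1, h2, h3⟩

def e3 : ℕ × ℕ × ℕ := (1, 1, 0)

def embA (u : ℕ × ℕ) : ℕ × ℕ × ℕ := (u.1, 0, u.2)
def embB (u : ℕ × ℕ) : ℕ × ℕ × ℕ := (0, u.1, u.2)
def sh3 (w : ℕ) (p : ℕ × ℕ × ℕ) : ℕ × ℕ × ℕ := (w + p.1, w + p.2.1, p.2.2)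

section threefold
variable {r a : ℕ}

lemma triple_ne_zero {p : ℕ × ℕ × ℕ} (h : 1 ≤ p.1 + p.2.1 + p.2.2) : p ≠ 0 := by
  intro h0
  rw [h0] at h
  simp at h

lemma triple_eq {p q : ℕ × ℕ × ℕ} (h1 : p.1 = q.1) (h2 : p.2.1 = q.2.1)
    (h3 : p.2.2 = q.2.2) : p = q := by
  apply Prod.ext h1
  exact Prod.ext h2 h3

lemma sig3_e3 (har : a < r) : Sig3 r a e3 := by
  unfold Sig3 e3
  dsimp only
  have : a * 1 + (r - a) * 1 + 0 = r := by omega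
  rw [this]

lemma e3_ne_zero : e3 ≠ (0 : ℕ × ℕ × ℕ) := by
  unfold e3
  intro h
  have := congrArg Prod.fst h
  simp at this

lemma sig3_embA {u : ℕ × ℕ} (h : Sig2 r a u) : Sig3 r a (embA u) := by
  unfold Sig3 embA
  dsimp only
  have : a * u.1 + (r - a) * 0 + u.2 = a * u.1 + u.2 := by omega
  rw [this]
  exact h

lemma sig3_embB (har : a < r) {u : ℕ × ℕ} (h : Sig2 r (r - a) u) : Sig3 r a (embB u) := by
  unfold Sig3 embB
  dsimp only
  have : a * 0 + (r - a) * u.1 + u.2 = (r - a) * u.1 + u.2 := by omega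
  rw [this]
  exact h

lemma sig3_sh (har : a < r) {p : ℕ × ℕ × ℕ} (h : Sig3 r a p) (w : ℕ) :
    Sig3 r a (sh3 w p) := by
  unfold Sig3 sh3 at *
  dsimp only
  have key : a * (w + p.1) + (r - a) * (w + p.2.1) + p.2.2
      = r * w + (a * p.1 + (r - a) * p.2.1 + p.2.2) := by
    have hb : a + (r - a) = r := by omega
    calc a * (w + p.1) + (r - a) * (w + p.2.1) + p.2.2
        = (a + (r - a)) * w + (a * p.1 + (r - a) * p.2.1 + p.2.2) := by ring
      _ = r * w + (a * p.1 + (r - a) * p.2.1 + p.2.2) := by rw [hb]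
  rw [key]
  exact dvd_add (Dvd.intro w rfl) h

lemma sig3_split_A (har : a < r) {p : ℕ × ℕ × ℕ} (hp : Sig3 r a p)
    (hle : p.2.1 ≤ p.1) : Sig2 r a (p.1 - p.2.1, p.2.2) := by
  unfold Sig3 at hp
  unfold Sig2
  dsimp only
  have key : (a * p.1 + (r - a) * p.2.1 + p.2.2) = r * p.2.1 + (a * (p.1 - p.2.1) + p.2.2) := by
    have hb : a + (r - a) = r := by omega
    have h2 : a * p.1 = a * (p.1 - p.2.1) + a * p.2.1 := by
      rw [← Nat.mul_add]
      congr 1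
      omega
    calc a * p.1 + (r - a) * p.2.1 + p.2.2
        = (a * (p.1 - p.2.1) + a * p.2.1) + (r - a) * p.2.1 + p.2.2 := by rw [h2]
      _ = (a + (r - a)) * p.2.1 + (a * (p.1 - p.2.1) + p.2.2) := by ring
      _ = r * p.2.1 + (a * (p.1 - p.2.1) + p.2.2) := by rw [hb]
  rw [key] at hp
  exact (Nat.dvd_add_right (Dvd.intro p.2.1 rfl)).mp hp

lemma sig3_split_B (har : a < r) {p : ℕ × ℕ × ℕ} (hp : Sig3 r a p)
    (hle : p.1 ≤ p.2.1) : Sig2 r (r - a) (p.2.1 - p.1, p.2.2) := by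
  unfold Sig3 at hp
  unfold Sig2
  dsimp only
  have key : (a * p.1 + (r - a) * p.2.1 + p.2.2) = r * p.1 + ((r - a) * (p.2.1 - p.1) + p.2.2) := by
    have hb : a + (r - a) = r := by omega
    have h2 : (r - a) * p.2.1 = (r - a) * (p.2.1 - p.1) + (r - a) * p.1 := by
      rw [← Nat.mul_add]
      congr 1
      omega
    calc a * p.1 + (r - a) * p.2.1 + p.2.2
        = a * p.1 + ((r - a) * (p.2.1 - p.1) + (r - a) * p.1) + p.2.2 := by rw [h2]
      _ = (a + (r - a)) * p.1 + ((r - a) * (p.2.1 - p.1) + p.2.2) := by ring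
      _ = r * p.1 + ((r - a) * (p.2.1 - p.1) + p.2.2) := by rw [hb]
  rw [key] at hp
  exact (Nat.dvd_add_right (Dvd.intro p.1 rfl)).mp hp

/-- the threefold supporting functional from an `A`-side edge -/
def ell3A (Ca : Chain r a) (t : ℕ) (p : ℕ × ℕ × ℕ) : ℤ :=
  (((Ca.g t).2 : ℤ) - ((Ca.g (t+1)).2 : ℤ)) * (p.1 : ℤ)
  + ((r:ℤ) - (((Ca.g t).2 : ℤ) - ((Ca.g (t+1)).2 : ℤ))) * (p.2.1 : ℤ)
  + (((Ca.g (t+1)).1 : ℤ) - ((Ca.g t).1 : ℤ)) * (p.2.2 : ℤ)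

/-- the threefold supporting functional from a `B`-side edge -/
def ell3B (Cb : Chain r (r - a)) (t : ℕ) (p : ℕ × ℕ × ℕ) : ℤ :=
  ((r:ℤ) - (((Cb.g t).2 : ℤ) - ((Cb.g (t+1)).2 : ℤ))) * (p.1 : ℤ)
  + (((Cb.g t).2 : ℤ) - ((Cb.g (t+1)).2 : ℤ)) * (p.2.1 : ℤ)
  + (((Cb.g (t+1)).1 : ℤ) - ((Cb.g t).1 : ℤ)) * (p.2.2 : ℤ)

lemma ell3A_dvd (Ca : Chain r a) (har : a < r) {t : ℕ} (ht : t ≤ Ca.N)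
    {p : ℕ × ℕ × ℕ} (hp : Sig3 r a p) : (r:ℤ) ∣ ell3A Ca t p := by
  have h1 : (r:ℤ) ∣ ((a * p.1 + (r - a) * p.2.1 + p.2.2 : ℕ) : ℤ) := Int.natCast_dvd_natCast.mpr hp
  have h2 : (r:ℤ) ∣ ((a * (Ca.g t).1 + (Ca.g t).2 : ℕ) : ℤ) :=
    Int.natCast_dvd_natCast.mpr (Ca.hcong t (by omega))
  have h3 : (r:ℤ) ∣ ((a * (Ca.g (t+1)).1 + (Ca.g (t+1)).2 : ℕ) : ℤ) :=
    Int.natCast_dvd_natCast.mpr (Ca.hcong (t+1) (by omega))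
  have key : ell3A Ca t p
      = (((Ca.g (t+1)).1 : ℤ) - ((Ca.g t).1 : ℤ)) * ((a * p.1 + (r - a) * p.2.1 + p.2.2 : ℕ) : ℤ)
      + ((p.1 : ℤ) - (p.2.1 : ℤ)) * (((a * (Ca.g t).1 + (Ca.g t).2 : ℕ) : ℤ)
          - ((a * (Ca.g (t+1)).1 + (Ca.g (t+1)).2 : ℕ) : ℤ))
      + (r:ℤ) * ((p.2.1 : ℤ) * (1 - (((Ca.g (t+1)).1 : ℤ) - ((Ca.g t).1 : ℤ)))) := by
    unfold ell3A
    push_cast [Nat.cast_sub (le_of_lt har)]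
    ring
  rw [key]
  exact dvd_add (dvd_add (Dvd.dvd.mul_left h1 _) (Dvd.dvd.mul_left (dvd_sub h2 h3) _))
    (Dvd.intro _ rfl)

lemma ell3B_dvd (Cb : Chain r (r - a)) (har : a < r) {t : ℕ} (ht : t ≤ Cb.N)
    {p : ℕ × ℕ × ℕ} (hp : Sig3 r a p) : (r:ℤ) ∣ ell3B Cb t p := by
  have h1 : (r:ℤ) ∣ ((a * p.1 + (r - a) * p.2.1 + p.2.2 : ℕ) : ℤ) := Int.natCast_dvd_natCast.mpr hp
  have h2 : (r:ℤ) ∣ (((r - a) * (Cb.g t).1 + (Cb.g t).2 : ℕ) : ℤ) :=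
    Int.natCast_dvd_natCast.mpr (Cb.hcong t (by omega))
  have h3 : (r:ℤ) ∣ (((r - a) * (Cb.g (t+1)).1 + (Cb.g (t+1)).2 : ℕ) : ℤ) :=
    Int.natCast_dvd_natCast.mpr (Cb.hcong (t+1) (by omega))
  have key : ell3B Cb t p
      = (((Cb.g (t+1)).1 : ℤ) - ((Cb.g t).1 : ℤ)) * ((a * p.1 + (r - a) * p.2.1 + p.2.2 : ℕ) : ℤ)
      + ((p.2.1 : ℤ) - (p.1 : ℤ)) * ((((r - a) * (Cb.g t).1 + (Cb.g t).2 : ℕ) : ℤ)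
          - (((r - a) * (Cb.g (t+1)).1 + (Cb.g (t+1)).2 : ℕ) : ℤ))
      + (r:ℤ) * ((p.1 : ℤ) * (1 - (((Cb.g (t+1)).1 : ℤ) - ((Cb.g t).1 : ℤ)))) := by
    unfold ell3B
    push_cast [Nat.cast_sub (le_of_lt har)]
    ring
  rw [key]
  exact dvd_add (dvd_add (Dvd.dvd.mul_left h1 _) (Dvd.dvd.mul_left (dvd_sub h2 h3) _))
    (Dvd.intro _ rfl)

lemma ell3A_pos (Ca : Chain r a) (hr : 2 ≤ r) {t : ℕ} (ht : t ≤ Ca.N)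
    {p : ℕ × ℕ × ℕ} (hp : p ≠ 0) : 1 ≤ ell3A Ca t p := by
  have hA : (1:ℤ) ≤ ((Ca.g t).2 : ℤ) - ((Ca.g (t+1)).2 : ℤ) := by
    have := Ca.hy t ht; omega
  have hA2 : ((Ca.g t).2 : ℤ) - ((Ca.g (t+1)).2 : ℤ) ≤ (r:ℤ) - 1 := Ca.halpha t ht
  have hB : (1:ℤ) ≤ ((Ca.g (t+1)).1 : ℤ) - ((Ca.g t).1 : ℤ) := by
    have := Ca.hx t ht; omega
  have hp' : 1 ≤ p.1 + p.2.1 + p.2.2 := by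
    by_contra h
    exact hp (by
      have h1 : p.1 = 0 ∧ p.2.1 = 0 ∧ p.2.2 = 0 := by omega
      exact triple_eq h1.1 h1.2.1 h1.2.2)
  have h3 : (1:ℤ) ≤ (p.1 : ℤ) + (p.2.1 : ℤ) + (p.2.2 : ℤ) := by exact_mod_cast hp'
  unfold ell3A
  nlinarith [Nat.cast_nonneg (α := ℤ) p.1, Nat.cast_nonneg (α := ℤ) p.2.1,
    Nat.cast_nonneg (α := ℤ) p.2.2]

lemma ell3B_pos (Cb : Chain r (r - a)) (hr : 2 ≤ r) {t : ℕ} (ht : t ≤ Cb.N)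
    {p : ℕ × ℕ × ℕ} (hp : p ≠ 0) : 1 ≤ ell3B Cb t p := by
  have hA : (1:ℤ) ≤ ((Cb.g t).2 : ℤ) - ((Cb.g (t+1)).2 : ℤ) := by
    have := Cb.hy t ht; omega
  have hA2 : ((Cb.g t).2 : ℤ) - ((Cb.g (t+1)).2 : ℤ) ≤ (r:ℤ) - 1 := Cb.halpha t ht
  have hB : (1:ℤ) ≤ ((Cb.g (t+1)).1 : ℤ) - ((Cb.g t).1 : ℤ) := by
    have := Cb.hx t ht; omega
  have hp' : 1 ≤ p.1 + p.2.1 + p.2.2 := by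
    by_contra h
    exact hp (by
      have h1 : p.1 = 0 ∧ p.2.1 = 0 ∧ p.2.2 = 0 := by omega
      exact triple_eq h1.1 h1.2.1 h1.2.2)
  have h3 : (1:ℤ) ≤ (p.1 : ℤ) + (p.2.1 : ℤ) + (p.2.2 : ℤ) := by exact_mod_cast hp'
  unfold ell3B
  nlinarith [Nat.cast_nonneg (α := ℤ) p.1, Nat.cast_nonneg (α := ℤ) p.2.1,
    Nat.cast_nonneg (α := ℤ) p.2.2]

lemma ell3A_ge_r (Ca : Chain r a) (hr : 2 ≤ r) (har : a < r) {t : ℕ} (ht : t ≤ Ca.N)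
    {p : ℕ × ℕ × ℕ} (hs : Sig3 r a p) (hp : p ≠ 0) : (r:ℤ) ≤ ell3A Ca t p :=
  Int.le_of_dvd (lt_of_lt_of_le zero_lt_one (ell3A_pos Ca hr ht hp)) (ell3A_dvd Ca har ht hs)

lemma ell3B_ge_r (Cb : Chain r (r - a)) (hr : 2 ≤ r) (har : a < r) {t : ℕ} (ht : t ≤ Cb.N)
    {p : ℕ × ℕ × ℕ} (hs : Sig3 r a p) (hp : p ≠ 0) : (r:ℤ) ≤ ell3B Cb t p :=
  Int.le_of_dvd (lt_of_lt_of_le zero_lt_one (ell3B_pos Cb hr ht hp)) (ell3B_dvd Cb har ht hs)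

lemma ell3A_sum (Ca : Chain r a) (t : ℕ) (l : Multiset (ℕ × ℕ × ℕ)) :
    ell3A Ca t l.sum = (l.map (ell3A Ca t)).sum := by
  induction l using Multiset.induction with
  | empty => simp [ell3A]
  | cons q l ih =>
      simp only [Multiset.sum_cons, Multiset.map_cons]
      rw [← ih]
      unfold ell3A
      simp only [Prod.fst_add, Prod.snd_add]
      push_cast
      ring

lemma ell3B_sum (Cb : Chain r (r - a)) (t : ℕ) (l : Multiset (ℕ × ℕ × ℕ)) :
    ell3B Cb t l.sum = (l.map (ell3B Cb t)).sum := by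
  induction l using Multiset.induction with
  | empty => simp [ell3B]
  | cons q l ih =>
      simp only [Multiset.sum_cons, Multiset.map_cons]
      rw [← ih]
      unfold ell3B
      simp only [Prod.fst_add, Prod.snd_add]
      push_cast
      ring

lemma ell3A_sum_ge (Ca : Chain r a) (hr : 2 ≤ r) (har : a < r) {t : ℕ} (ht : t ≤ Ca.N)
    (l : Multiset (ℕ × ℕ × ℕ)) (hl : ∀ q ∈ l, Sig3 r a q ∧ q ≠ 0) :
    (Multiset.card l : ℤ) * r ≤ ell3A Ca t l.sum := by
  rw [ell3A_sum]
  induction l using Multiset.induction with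
  | empty => simp
  | cons q l ih =>
      simp only [Multiset.map_cons, Multiset.sum_cons, Multiset.card_cons]
      have h1 := ell3A_ge_r Ca hr har ht (hl q (Multiset.mem_cons_self q l)).1
        (hl q (Multiset.mem_cons_self q l)).2
      have h2 := ih (fun q hq => hl q (Multiset.mem_cons_of_mem hq))
      push_cast
      push_cast at h2
      linarith

lemma ell3B_sum_ge (Cb : Chain r (r - a)) (hr : 2 ≤ r) (har : a < r) {t : ℕ} (ht : t ≤ Cb.N)
    (l : Multiset (ℕ × ℕ × ℕ)) (hl : ∀ q ∈ l, Sig3 r a q ∧ q ≠ 0) :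
    (Multiset.card l : ℤ) * r ≤ ell3B Cb t l.sum := by
  rw [ell3B_sum]
  induction l using Multiset.induction with
  | empty => simp
  | cons q l ih =>
      simp only [Multiset.map_cons, Multiset.sum_cons, Multiset.card_cons]
      have h1 := ell3B_ge_r Cb hr har ht (hl q (Multiset.mem_cons_self q l)).1
        (hl q (Multiset.mem_cons_self q l)).2
      have h2 := ih (fun q hq => hl q (Multiset.mem_cons_of_mem hq))
      push_cast
      push_cast at h2
      linarith

lemma ell3A_value (Ca : Chain r a) {t : ℕ} (ht : t ≤ Ca.N) (w lam mu : ℕ) :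
    ell3A Ca t (sh3 w (embA (chphi Ca (t, lam, mu)))) = ((w:ℤ) + lam + mu) * r := by
  have h1 := ell_g_self Ca ht
  have h2 := ell_g_next Ca ht
  unfold ell at h1 h2
  unfold ell3A sh3 embA chphi
  dsimp only
  push_cast
  linear_combination (lam : ℤ) * h1 + (mu : ℤ) * h2

lemma ell3B_value (Cb : Chain r (r - a)) {t : ℕ} (ht : t ≤ Cb.N) (w lam mu : ℕ) :
    ell3B Cb t (sh3 w (embB (chphi Cb (t, lam, mu)))) = ((w:ℤ) + lam + mu) * r := by
  have h1 := ell_g_self Cb ht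
  have h2 := ell_g_next Cb ht
  unfold ell at h1 h2
  unfold ell3B sh3 embB chphi
  dsimp only
  push_cast
  linear_combination (lam : ℤ) * h1 + (mu : ℤ) * h2

lemma sumP3_upperA (Ca : Chain r a) (hr : 2 ≤ r) (har : a < r) {t : ℕ} (ht : t ≤ Ca.N)
    {w lam mu n : ℕ} (h : SumP3 r a n (sh3 w (embA (chphi Ca (t, lam, mu))))) :
    n ≤ w + lam + mu := by
  obtain ⟨l, hc, hmem, hsum⟩ := h
  have h1 := ell3A_sum_ge Ca hr har ht l hmem
  rw [hsum, ell3A_value Ca ht] at h1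
  have hrpos : (0:ℤ) < (r:ℤ) := by exact_mod_cast (by omega : 0 < r)
  have hcz : (n:ℤ) ≤ (Multiset.card l : ℤ) := by exact_mod_cast hc
  have : (n : ℤ) ≤ (w : ℤ) + lam + mu := by nlinarith
  exact_mod_cast this

lemma sumP3_upperB (Cb : Chain r (r - a)) (hr : 2 ≤ r) (har : a < r) {t : ℕ} (ht : t ≤ Cb.N)
    {w lam mu n : ℕ} (h : SumP3 r a n (sh3 w (embB (chphi Cb (t, lam, mu))))) :
    n ≤ w + lam + mu := by
  obtain ⟨l, hc, hmem, hsum⟩ := h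
  have h1 := ell3B_sum_ge Cb hr har ht l hmem
  rw [hsum, ell3B_value Cb ht] at h1
  have hrpos : (0:ℤ) < (r:ℤ) := by exact_mod_cast (by omega : 0 < r)
  have hcz : (n:ℤ) ≤ (Multiset.card l : ℤ) := by exact_mod_cast hc
  have : (n : ℤ) ≤ (w : ℤ) + lam + mu := by nlinarith
  exact_mod_cast this

lemma embA_sum (l : Multiset (ℕ × ℕ)) : embA l.sum = (l.map embA).sum := by
  induction l using Multiset.induction with
  | empty => rfl
  | cons q l ih =>
      simp only [Multiset.sum_cons, Multiset.map_cons]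
      rw [← ih]
      apply triple_eq <;> simp [embA]

lemma embB_sum (l : Multiset (ℕ × ℕ)) : embB l.sum = (l.map embB).sum := by
  induction l using Multiset.induction with
  | empty => rfl
  | cons q l ih =>
      simp only [Multiset.sum_cons, Multiset.map_cons]
      rw [← ih]
      apply triple_eq <;> simp [embB]

lemma embA_ne_zero {u : ℕ × ℕ} (hu : u ≠ 0) : embA u ≠ 0 := by
  intro h
  apply hu
  unfold embA at h
  have h1 := congrArg Prod.fst h
  have h2 := congrArg (fun z : ℕ × ℕ × ℕ => z.2.2) h
  dsimp only at h1 h2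
  exact Prod.ext h1 h2

lemma embB_ne_zero {u : ℕ × ℕ} (hu : u ≠ 0) : embB u ≠ 0 := by
  intro h
  apply hu
  unfold embB at h
  have h1 := congrArg (fun z : ℕ × ℕ × ℕ => z.2.1) h
  have h2 := congrArg (fun z : ℕ × ℕ × ℕ => z.2.2) h
  dsimp only at h1 h2
  exact Prod.ext h1 h2

lemma sumP3_combineA (har : a < r) {m : ℕ} {u : ℕ × ℕ} (h : SumP r a m u) (w : ℕ) :
    SumP3 r a (w + m) (sh3 w (embA u)) := by
  obtain ⟨l, hc, hmem, hsum⟩ := h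
  refine ⟨Multiset.replicate w e3 + l.map embA, ?_, ?_, ?_⟩
  · simp only [Multiset.card_add, Multiset.card_replicate, Multiset.card_map]
    omega
  · intro q hq
    rcases Multiset.mem_add.mp hq with h | h
    · rw [Multiset.eq_of_mem_replicate h]
      exact ⟨sig3_e3 har, e3_ne_zero⟩
    · obtain ⟨v, hv, rfl⟩ := Multiset.mem_map.mp h
      exact ⟨sig3_embA (hmem v hv).1, embA_ne_zero (hmem v hv).2⟩
  · rw [Multiset.sum_add, Multiset.sum_replicate, ← embA_sum, hsum]
    apply triple_eq
    · simp [e3, sh3, embA, smul_eq_mul, mul_one]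
    · simp [e3, sh3, embA, smul_eq_mul]
    · simp [e3, sh3, embA, smul_eq_mul]

lemma sumP3_combineB (har : a < r) {m : ℕ} {u : ℕ × ℕ} (h : SumP r (r - a) m u) (w : ℕ) :
    SumP3 r a (w + m) (sh3 w (embB u)) := by
  obtain ⟨l, hc, hmem, hsum⟩ := h
  refine ⟨Multiset.replicate w e3 + l.map embB, ?_, ?_, ?_⟩
  · simp only [Multiset.card_add, Multiset.card_replicate, Multiset.card_map]
    omega
  · intro q hq
    rcases Multiset.mem_add.mp hq with h | h
    · rw [Multiset.eq_of_mem_replicate h]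
      exact ⟨sig3_e3 har, e3_ne_zero⟩
    · obtain ⟨v, hv, rfl⟩ := Multiset.mem_map.mp h
      exact ⟨sig3_embB har (hmem v hv).1, embB_ne_zero (hmem v hv).2⟩
  · rw [Multiset.sum_add, Multiset.sum_replicate, ← embB_sum, hsum]
    apply triple_eq
    · simp [e3, sh3, embB, smul_eq_mul]
    · simp [e3, sh3, embB, smul_eq_mul, mul_one]
    · simp [e3, sh3, embB, smul_eq_mul]

end threefold

section b3
variable {r a : ℕ} (Ca : Chain r a) (Cb : Chain r (r - a))

def B3 (n : ℕ) : Finset (ℕ × ℕ × ℕ) :=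
  (Finset.range n).biUnion (fun w =>
    ((chB Ca (n - w)).image (fun u => (w + u.1, w, u.2))) ∪
    ((chB Cb (n - w)).image (fun u => (w, w + u.1, u.2))))

lemma shA_eq (w : ℕ) (u : ℕ × ℕ) : ((w + u.1, w, u.2) : ℕ×ℕ×ℕ) = sh3 w (embA u) := by
  apply triple_eq <;> simp [sh3, embA]

lemma shB_eq (w : ℕ) (u : ℕ × ℕ) : ((w, w + u.1, u.2) : ℕ×ℕ×ℕ) = sh3 w (embB u) := by
  apply triple_eq <;> simp [sh3, embB]

lemma mem_B3 (hr : 2 ≤ r) (ha : 1 ≤ a) (har : a < r) (hco : Nat.gcd a r = 1)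
    (hcob : Nat.gcd (r - a) r = 1) {n : ℕ} {p : ℕ × ℕ × ℕ} :
    p ∈ B3 Ca Cb n ↔ Sig3 r a p ∧ ¬ SumP3 r a n p := by
  constructor
  · intro hp
    rw [B3, Finset.mem_biUnion] at hp
    obtain ⟨w, hw, hp⟩ := hp
    rw [Finset.mem_range] at hw
    rw [Finset.mem_union] at hp
    rcases hp with hp | hp
    · obtain ⟨u, hu, rfl⟩ := Finset.mem_image.mp hp
      rw [mem_chB Ca hr hco] at hu
      obtain ⟨hsig, hns⟩ := hu
      obtain ⟨T, lam, mu, hT, hurep, -⟩ := rep_exists Ca hr hco hsig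
      have hlow := sumP_lower Ca hT lam mu
      rw [← hurep] at hlow
      have hlt : lam + mu < n - w := by
        by_contra hge
        exact hns (sumP_mono hlow (by omega))
      rw [shA_eq]
      constructor
      · exact sig3_sh har (sig3_embA hsig) w
      · rw [hurep]
        intro hs
        have := sumP3_upperA Ca hr har hT hs
        omega
    · obtain ⟨u, hu, rfl⟩ := Finset.mem_image.mp hp
      rw [mem_chB Cb hr hcob] at hu
      obtain ⟨hsig, hns⟩ := hu
      obtain ⟨T, lam, mu, hT, hurep, -⟩ := rep_exists Cb hr hcob hsig
      have hlow := sumP_lower Cb hT lam mu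
      rw [← hurep] at hlow
      have hlt : lam + mu < n - w := by
        by_contra hge
        exact hns (sumP_mono hlow (by omega))
      rw [shB_eq]
      constructor
      · exact sig3_sh har (sig3_embB har hsig) w
      · rw [hurep]
        intro hs
        have := sumP3_upperB Cb hr har hT hs
        omega
  · rintro ⟨hsig, hns⟩
    have hn0 : 1 ≤ n := by
      by_contra h
      have h0 : n = 0 := by omega
      subst h0
      apply hns
      by_cases hz : p = 0
      · exact ⟨0, by simp, by simp, by simp [hz]⟩
      · exact ⟨{p}, by simp, by simp [hsig, hz], by simp⟩
    by_cases hcase : p.2.1 ≤ p.1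
    · set w := p.2.1 with hw
      set u : ℕ × ℕ := (p.1 - w, p.2.2) with hu
      have hpu : p = (w + u.1, w, u.2) := by
        apply triple_eq <;> simp only [hu] <;> omega
      have hsh : p = sh3 w (embA u) := by rw [hpu, shA_eq]
      have hsigu : Sig2 r a u := sig3_split_A har hsig hcase
      obtain ⟨T, lam, mu, hT, hurep, -⟩ := rep_exists Ca hr hco hsigu
      have hlow : SumP3 r a (w + (lam + mu)) p := by
        rw [hsh]
        exact sumP3_combineA har (hurep ▸ sumP_lower Ca hT lam mu) w
      have hwlt : w + (lam + mu) < n := by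
        by_contra hge
        exact hns (sumP3_mono hlow (by omega))
      have hnsu : ¬ SumP r a (n - w) u := by
        intro hsu
        apply hns
        have h2 := sumP3_combineA har hsu w
        rw [← hsh] at h2
        exact sumP3_mono h2 (by omega)
      rw [B3, Finset.mem_biUnion]
      refine ⟨w, Finset.mem_range.mpr (by omega), ?_⟩
      rw [Finset.mem_union]
      left
      rw [Finset.mem_image]
      exact ⟨u, (mem_chB Ca hr hco).mpr ⟨hsigu, hnsu⟩, hpu.symm⟩
    · push_neg at hcase
      set w := p.1 with hw
      set u : ℕ × ℕ := (p.2.1 - w, p.2.2) with hu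
      have hpu : p = (w, w + u.1, u.2) := by
        apply triple_eq <;> simp only [hu] <;> omega
      have hsh : p = sh3 w (embB u) := by rw [hpu, shB_eq]
      have hsigu : Sig2 r (r - a) u := sig3_split_B har hsig (by omega)
      obtain ⟨T, lam, mu, hT, hurep, -⟩ := rep_exists Cb hr hcob hsigu
      have hlow : SumP3 r a (w + (lam + mu)) p := by
        rw [hsh]
        exact sumP3_combineB har (hurep ▸ sumP_lower Cb hT lam mu) w
      have hwlt : w + (lam + mu) < n := by
        by_contra hge
        exact hns (sumP3_mono hlow (by omega))
      have hnsu : ¬ SumP r (r - a) (n - w) u := by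
        intro hsu
        apply hns
        have h2 := sumP3_combineB har hsu w
        rw [← hsh] at h2
        exact sumP3_mono h2 (by omega)
      rw [B3, Finset.mem_biUnion]
      refine ⟨w, Finset.mem_range.mpr (by omega), ?_⟩
      rw [Finset.mem_union]
      right
      rw [Finset.mem_image]
      exact ⟨u, (mem_chB Cb hr hcob).mpr ⟨hsigu, hnsu⟩, hpu.symm⟩

lemma gauss_lin (n : ℕ) : 2 * (∑ j ∈ Finset.range n, (j+1)) = n * (n+1) := by
  have h1 : (∑ i ∈ Finset.range (n+1), i) = (∑ j ∈ Finset.range n, (j+1)) + 0 :=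
    Finset.sum_range_succ' (fun i => i) n
  have h2 := Finset.sum_range_id_mul_two (n+1)
  rw [Nat.add_sub_cancel] at h2
  have h3 : (∑ j ∈ Finset.range n, (j+1)) = ∑ i ∈ Finset.range (n+1), i := by omega
  rw [h3, Nat.mul_comm n (n+1), ← h2, Nat.mul_comm]

lemma gauss_cube (n : ℕ) : 3 * (∑ j ∈ Finset.range n, (j+1)*j) + n = n^3 := by
  induction n with
  | zero => simp
  | succ k ih =>
      rw [Finset.sum_range_succ]
      zify at ih ⊢
      linear_combination ih

lemma B3_card (hr : 2 ≤ r) (ha : 1 ≤ a) (har : a < r) (hco : Nat.gcd a r = 1)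
    (hcob : Nat.gcd (r - a) r = 1) (n : ℕ) :
    6 * (B3 Ca Cb n).card + (Ca.N + Cb.N + 2) * n
      = 3 * (n * (n+1)) + (Ca.N + Cb.N + 2) * n ^ 3 := by
  have hrpos : 0 < r := by omega
  -- the slices are disjoint
  have hmin : ∀ w, w < n → ∀ p ∈ ((chB Ca (n - w)).image (fun u => (w + u.1, w, u.2))) ∪
      ((chB Cb (n - w)).image (fun u => (w, w + u.1, u.2))), min p.1 p.2.1 = w := by
    intro w hw p hp
    rw [Finset.mem_union] at hp
    rcases hp with hp | hp <;> obtain ⟨u, -, rfl⟩ := Finset.mem_image.mp hp <;>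
      dsimp only <;> omega
  have hcard := Finset.card_biUnion (s := Finset.range n)
    (t := fun w => ((chB Ca (n - w)).image (fun u => (w + u.1, w, u.2))) ∪
      ((chB Cb (n - w)).image (fun u => (w, w + u.1, u.2)))) ?_
  swap
  · intro w hw w' hw' hww'
    rw [Function.onFun, Finset.disjoint_left]
    intro p hp1 hp2
    rw [Finset.mem_coe, Finset.mem_range] at hw hw'
    have := hmin w hw p hp1
    have := hmin w' hw' p hp2
    omega
  -- per-slice cardinality
  have hslice : ∀ w, w < n →
      (((chB Ca (n - w)).image (fun u => (w + u.1, w, u.2))) ∪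
       ((chB Cb (n - w)).image (fun u => (w, w + u.1, u.2)))).card + (n - w)
      = (chB Ca (n - w)).card + (chB Cb (n - w)).card := by
    intro w hw
    have hinjA : Function.Injective (fun u : ℕ × ℕ => ((w + u.1, w, u.2) : ℕ×ℕ×ℕ)) := by
      intro x y h
      have h1 := congrArg Prod.fst h
      have h2 := congrArg (fun z : ℕ×ℕ×ℕ => z.2.2) h
      dsimp only at h1 h2
      exact Prod.ext (by omega) h2
    have hinjB : Function.Injective (fun u : ℕ × ℕ => ((w, w + u.1, u.2) : ℕ×ℕ×ℕ)) := by
      intro x y h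
      have h1 := congrArg (fun z : ℕ×ℕ×ℕ => z.2.1) h
      have h2 := congrArg (fun z : ℕ×ℕ×ℕ => z.2.2) h
      dsimp only at h1 h2
      exact Prod.ext (by omega) h2
    have hint : ((chB Ca (n - w)).image (fun u => ((w + u.1, w, u.2) : ℕ×ℕ×ℕ))) ∩
        ((chB Cb (n - w)).image (fun u => (w, w + u.1, u.2)))
        = (Finset.range (n - w)).image (fun q => ((w, w, r * q) : ℕ×ℕ×ℕ)) := by
      ext p
      rw [Finset.mem_inter, Finset.mem_image, Finset.mem_image, Finset.mem_image]
      constructor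
      · rintro ⟨⟨x, hx, rfl⟩, ⟨y, hy, hxy⟩⟩
        have e1 : w + x.1 = w := congrArg Prod.fst hxy.symm
        have e2 : w = w + y.1 := congrArg (fun z : ℕ×ℕ×ℕ => z.2.1) hxy.symm
        have e3 : x.2 = y.2 := congrArg (fun z : ℕ×ℕ×ℕ => z.2.2) hxy.symm
        have hx1 : x.1 = 0 := by omega
        rw [mem_chB Ca hr hco] at hx
        obtain ⟨hsigx, hnsx⟩ := hx
        have hxis : x = (0, x.2) := Prod.ext hx1 rfl
        have hdvd : r ∣ x.2 := by
          have := hsigx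
          unfold Sig2 at this
          rw [hx1] at this
          simpa using this
        obtain ⟨q, hq⟩ := hdvd
        have hqlt : q < n - w := by
          by_contra hge
          apply hnsx
          rw [hxis, hq]
          exact (sumP_purez Ca hr q (n - w)).mpr (by omega)
        refine ⟨q, Finset.mem_range.mpr hqlt, ?_⟩
        apply triple_eq <;> dsimp only <;> omega
      · rintro ⟨q, hq, rfl⟩
        rw [Finset.mem_range] at hq
        constructor
        · refine ⟨(0, r * q), ?_, by apply triple_eq <;> dsimp only <;> omega⟩
          rw [mem_chB Ca hr hco]
          constructor
          · unfold Sig2; dsimp only; exact ⟨q, by ring⟩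
          · intro hs
            have := (sumP_purez Ca hr q (n - w)).mp hs
            omega
        · refine ⟨(0, r * q), ?_, by apply triple_eq <;> dsimp only <;> omega⟩
          rw [mem_chB Cb hr hcob]
          constructor
          · unfold Sig2; dsimp only; exact ⟨q, by ring⟩
          · intro hs
            have := (sumP_purez Cb hr q (n - w)).mp hs
            omega
    have hu := Finset.card_union_add_card_inter
      ((chB Ca (n - w)).image (fun u => ((w + u.1, w, u.2) : ℕ×ℕ×ℕ)))
      ((chB Cb (n - w)).image (fun u => (w, w + u.1, u.2)))
    rw [hint] at hu
    rw [Finset.card_image_of_injective _ hinjA, Finset.card_image_of_injective _ hinjB] at hu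
    rw [Finset.card_image_of_injective _ (fun x y h => by
      have := congrArg (fun z : ℕ×ℕ×ℕ => z.2.2) h
      dsimp only at this
      exact Nat.eq_of_mul_eq_mul_left hrpos this)] at hu
    rw [Finset.card_range] at hu
    omega
  -- sum the slices
  rw [B3, hcard]
  have hsum1 : (∑ w ∈ Finset.range n,
      (((chB Ca (n - w)).image (fun u => ((w + u.1, w, u.2) : ℕ×ℕ×ℕ))) ∪
       ((chB Cb (n - w)).image (fun u => (w, w + u.1, u.2)))).card) + (∑ w ∈ Finset.range n, (n - w))
      = ∑ w ∈ Finset.range n, ((chB Ca (n - w)).card + (chB Cb (n - w)).card) := by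
    rw [← Finset.sum_add_distrib]
    apply Finset.sum_congr rfl
    intro w hw
    exact hslice w (Finset.mem_range.mp hw)
  -- reindex  m = n - w = j + 1
  have hreindex : ∀ f : ℕ → ℕ, (∑ w ∈ Finset.range n, f (n - w)) = ∑ j ∈ Finset.range n, f (j+1) := by
    intro f
    have h1 : ∀ w ∈ Finset.range n, f (n - w) = (fun j => f (j+1)) (n - 1 - w) := by
      intro w hw
      rw [Finset.mem_range] at hw
      congr 1
      omega
    rw [Finset.sum_congr rfl h1, Finset.sum_range_reflect (fun j => f (j+1)) n]
  have hA : 2 * (∑ j ∈ Finset.range n, (chB Ca (j+1)).card)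
      = 2 * (∑ j ∈ Finset.range n, (j+1)) + (Ca.N + 1) * (∑ j ∈ Finset.range n, (j+1)*j) := by
    rw [Finset.mul_sum, Finset.mul_sum, Finset.mul_sum, ← Finset.sum_add_distrib]
    apply Finset.sum_congr rfl
    intro j hj
    have := chB_card Ca hr (j+1)
    simp only [Nat.add_sub_cancel] at this
    omega
  have hB : 2 * (∑ j ∈ Finset.range n, (chB Cb (j+1)).card)
      = 2 * (∑ j ∈ Finset.range n, (j+1)) + (Cb.N + 1) * (∑ j ∈ Finset.range n, (j+1)*j) := by
    rw [Finset.mul_sum, Finset.mul_sum, Finset.mul_sum, ← Finset.sum_add_distrib]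
    apply Finset.sum_congr rfl
    intro j hj
    have := chB_card Cb hr (j+1)
    simp only [Nat.add_sub_cancel] at this
    omega
  have hGL := gauss_lin n
  have hGC := gauss_cube n
  -- put everything together over ℤ
  have hsum1' := hsum1
  rw [Finset.sum_add_distrib] at hsum1'
  rw [hreindex (fun m => (chB Ca m).card), hreindex (fun m => (chB Cb m).card),
    hreindex (fun m => m)] at hsum1'
  set S := ∑ w ∈ Finset.range n,
      (((chB Ca (n - w)).image (fun u => ((w + u.1, w, u.2) : ℕ×ℕ×ℕ))) ∪
       ((chB Cb (n - w)).image (fun u => (w, w + u.1, u.2)))).card with hS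
  set SA := ∑ j ∈ Finset.range n, (chB Ca (j+1)).card with hSA
  set SB := ∑ j ∈ Finset.range n, (chB Cb (j+1)).card with hSB
  set P := ∑ j ∈ Finset.range n, (j+1) with hP
  set X := ∑ j ∈ Finset.range n, (j+1)*j with hX
  -- hsum1' : S + P = SA + SB ; hA : 2SA = 2P + caX ; hB : 2SB = 2P + cbX
  -- hGL : 2P = n(n+1) ; hGC : 3X + n = n³
  zify at hsum1' hA hB hGL hGC ⊢
  linear_combination 6 * hsum1' + 3 * hA + 3 * hB + 3 * hGL + ((Ca.N : ℤ) + Cb.N + 2) * hGC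

end b3


-- ===================== transfer to Finsupp exponents =====================

def pi2 (d : Fin 2 →₀ ℕ) : ℕ × ℕ := (d 0, d 1)
noncomputable def iota2 (p : ℕ × ℕ) : Fin 2 →₀ ℕ :=
  Finsupp.single 0 p.1 + Finsupp.single 1 p.2

def pi3 (d : Fin 3 →₀ ℕ) : ℕ × ℕ × ℕ := (d 0, d 1, d 2)
noncomputable def iota3 (p : ℕ × ℕ × ℕ) : Fin 3 →₀ ℕ :=
  Finsupp.single 0 p.1 + Finsupp.single 1 p.2.1 + Finsupp.single 2 p.2.2

lemma pi2_iota2 (p : ℕ × ℕ) : pi2 (iota2 p) = p := by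
  unfold pi2 iota2
  apply Prod.ext <;> simp [Finsupp.single_apply]

lemma iota2_pi2 (d : Fin 2 →₀ ℕ) : iota2 (pi2 d) = d := by
  unfold pi2 iota2
  ext i
  fin_cases i <;> simp [Finsupp.single_apply]

lemma pi3_iota3 (p : ℕ × ℕ × ℕ) : pi3 (iota3 p) = p := by
  unfold pi3 iota3
  apply triple_eq <;> simp [Finsupp.single_apply]

lemma iota3_pi3 (d : Fin 3 →₀ ℕ) : iota3 (pi3 d) = d := by
  unfold pi3 iota3
  ext i
  fin_cases i <;> simp [Finsupp.single_apply]

lemma pi2_add (d e : Fin 2 →₀ ℕ) : pi2 (d + e) = pi2 d + pi2 e := by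
  unfold pi2; apply Prod.ext <;> simp

lemma pi3_add (d e : Fin 3 →₀ ℕ) : pi3 (d + e) = pi3 d + pi3 e := by
  unfold pi3; apply triple_eq <;> simp [Prod.fst_add, Prod.snd_add]

lemma pi2_sum (l : Multiset (Fin 2 →₀ ℕ)) : pi2 l.sum = (l.map pi2).sum := by
  induction l using Multiset.induction with
  | empty => rfl
  | cons q l ih =>
      simp only [Multiset.sum_cons, Multiset.map_cons]
      rw [← ih, pi2_add]

lemma pi3_sum (l : Multiset (Fin 3 →₀ ℕ)) : pi3 l.sum = (l.map pi3).sum := by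
  induction l using Multiset.induction with
  | empty => rfl
  | cons q l ih =>
      simp only [Multiset.sum_cons, Multiset.map_cons]
      rw [← ih, pi3_add]

lemma iota2_sum (l : Multiset (ℕ × ℕ)) : iota2 l.sum = (l.map iota2).sum := by
  induction l using Multiset.induction with
  | empty => simp [iota2]
  | cons q l ih =>
      simp only [Multiset.sum_cons, Multiset.map_cons]
      rw [← ih]
      unfold iota2
      simp only [Prod.fst_add, Prod.snd_add, Finsupp.single_add]
      abel

lemma iota3_sum (l : Multiset (ℕ × ℕ × ℕ)) : iota3 l.sum = (l.map iota3).sum := by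
  induction l using Multiset.induction with
  | empty => simp [iota3]
  | cons q l ih =>
      simp only [Multiset.sum_cons, Multiset.map_cons]
      rw [← ih]
      unfold iota3
      simp only [Prod.fst_add, Prod.snd_add, Finsupp.single_add]
      abel

lemma pi2_eq_zero {d : Fin 2 →₀ ℕ} : pi2 d = 0 ↔ d = 0 := by
  constructor
  · intro h
    have := congrArg iota2 h
    rw [iota2_pi2] at this
    rw [this]
    unfold iota2
    simp
  · intro h; rw [h]; rfl

lemma pi3_eq_zero {d : Fin 3 →₀ ℕ} : pi3 d = 0 ↔ d = 0 := by
  constructor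
  · intro h
    have := congrArg iota3 h
    rw [iota3_pi3] at this
    rw [this]
    unfold iota3
    simp
  · intro h; rw [h]; rfl

lemma wt2_eq {r a : ℕ} (d : Fin 2 →₀ ℕ) : wt ![a, 1] d = a * d 0 + d 1 := by
  unfold wt
  rw [Fin.sum_univ_two]
  simp

lemma wt3_eq {r a b : ℕ} (d : Fin 3 →₀ ℕ) : wt ![a, b, 1] d = a * d 0 + b * d 1 + d 2 := by
  unfold wt
  rw [Fin.sum_univ_three]
  simp

lemma sumN_iff_sumP {r a n : ℕ} (d : Fin 2 →₀ ℕ) :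
    SumN r ![a, 1] n d ↔ SumP r a n (pi2 d) := by
  constructor
  · rintro ⟨l, hc, hm, rfl⟩
    refine ⟨l.map pi2, by simpa using hc, ?_, (pi2_sum l).symm⟩
    intro q hq
    obtain ⟨e, he, rfl⟩ := Multiset.mem_map.mp hq
    obtain ⟨h1, h2⟩ := hm e he
    refine ⟨?_, fun h0 => h2 (pi2_eq_zero.mp h0)⟩
    unfold Sig2 pi2
    dsimp only
    rw [← wt2_eq (r := r)]
    exact h1
  · rintro ⟨l, hc, hm, hs⟩
    refine ⟨l.map iota2, by simpa using hc, ?_, ?_⟩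
    · intro e he
      obtain ⟨q, hq, rfl⟩ := Multiset.mem_map.mp he
      obtain ⟨h1, h2⟩ := hm q hq
      constructor
      · rw [wt2_eq (r := r)]
        unfold Sig2 at h1
        have e0 : (iota2 q) 0 = q.1 := congrArg Prod.fst (pi2_iota2 q)
        have e1 : (iota2 q) 1 = q.2 := congrArg Prod.snd (pi2_iota2 q)
        rw [e0, e1]
        exact h1
      · intro h0
        apply h2
        have := congrArg pi2 h0
        rw [pi2_iota2] at this
        rw [this]; rfl
    · have : (l.map iota2).sum = iota2 l.sum := (iota2_sum l).symm
      rw [this, hs, iota2_pi2]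

lemma sumN_iff_sumP3 {r a n : ℕ} (d : Fin 3 →₀ ℕ) :
    SumN r ![a, r - a, 1] n d ↔ SumP3 r a n (pi3 d) := by
  constructor
  · rintro ⟨l, hc, hm, rfl⟩
    refine ⟨l.map pi3, by simpa using hc, ?_, (pi3_sum l).symm⟩
    intro q hq
    obtain ⟨e, he, rfl⟩ := Multiset.mem_map.mp hq
    obtain ⟨h1, h2⟩ := hm e he
    refine ⟨?_, fun h0 => h2 (pi3_eq_zero.mp h0)⟩
    unfold Sig3 pi3
    dsimp only
    rw [← wt3_eq (r := r)]
    exact h1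
  · rintro ⟨l, hc, hm, hs⟩
    refine ⟨l.map iota3, by simpa using hc, ?_, ?_⟩
    · intro e he
      obtain ⟨q, hq, rfl⟩ := Multiset.mem_map.mp he
      obtain ⟨h1, h2⟩ := hm q hq
      constructor
      · rw [wt3_eq (r := r)]
        have e0 : (iota3 q) 0 = q.1 := congrArg Prod.fst (pi3_iota3 q)
        have e1 : (iota3 q) 1 = q.2.1 := congrArg (fun z : ℕ×ℕ×ℕ => z.2.1) (pi3_iota3 q)
        have e2 : (iota3 q) 2 = q.2.2 := congrArg (fun z : ℕ×ℕ×ℕ => z.2.2) (pi3_iota3 q)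
        rw [e0, e1, e2]
        exact h1
      · intro h0
        apply h2
        have := congrArg pi3 h0
        rw [pi3_iota3] at this
        rw [this]; rfl
    · have : (l.map iota3).sum = iota3 l.sum := (iota3_sum l).symm
      rw [this, hs, iota3_pi3]

lemma iota2_inj : Function.Injective iota2 := by
  intro x y h
  have := congrArg pi2 h
  rwa [pi2_iota2, pi2_iota2] at this

lemma iota3_inj : Function.Injective iota3 := by
  intro x y h
  have := congrArg pi3 h
  rwa [pi3_iota3, pi3_iota3] at this

lemma hsf_surface {r a : ℕ} (hr : 2 ≤ r) (ha : 1 ≤ a) (har : a < r)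
    (hco : Nat.gcd a r = 1) (C : Chain r a) (n : ℕ) :
    2 * hsf r ![a, 1] n = 2 * n + (C.N + 1) * (n * (n - 1)) := by
  have hB := hsf_eq_card r hr ![a, 1] n ((chB C n).image iota2) ?_
  · rw [hB, Finset.card_image_of_injective _ iota2_inj]
    exact chB_card C hr n
  · intro d
    rw [Finset.mem_image]
    constructor
    · rintro ⟨p, hp, rfl⟩
      rw [mem_chB C hr hco] at hp
      obtain ⟨h1, h2⟩ := hp
      constructor
      · rw [wt2_eq (r := r)]
        have e0 : (iota2 p) 0 = p.1 := congrArg Prod.fst (pi2_iota2 p)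
        have e1 : (iota2 p) 1 = p.2 := congrArg Prod.snd (pi2_iota2 p)
        rw [e0, e1]
        exact h1
      · rw [sumN_iff_sumP, pi2_iota2]
        exact h2
    · rintro ⟨h1, h2⟩
      refine ⟨pi2 d, ?_, iota2_pi2 d⟩
      rw [mem_chB C hr hco]
      constructor
      · unfold Sig2 pi2
        dsimp only
        rw [← wt2_eq (r := r)]
        exact h1
      · rw [← sumN_iff_sumP]
        exact h2

lemma hsf_threefold {r a : ℕ} (hr : 2 ≤ r) (ha : 1 ≤ a) (har : a < r)
    (hco : Nat.gcd a r = 1) (hcob : Nat.gcd (r - a) r = 1)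
    (Ca : Chain r a) (Cb : Chain r (r - a)) (n : ℕ) :
    6 * hsf r ![a, r - a, 1] n + (Ca.N + Cb.N + 2) * n
      = 3 * (n * (n+1)) + (Ca.N + Cb.N + 2) * n ^ 3 := by
  have hB := hsf_eq_card r hr ![a, r - a, 1] n ((B3 Ca Cb n).image iota3) ?_
  · rw [hB, Finset.card_image_of_injective _ iota3_inj]
    exact B3_card Ca Cb hr ha har hco hcob n
  · intro d
    rw [Finset.mem_image]
    constructor
    · rintro ⟨p, hp, rfl⟩
      rw [mem_B3 Ca Cb hr ha har hco hcob] at hp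
      obtain ⟨h1, h2⟩ := hp
      constructor
      · rw [wt3_eq (r := r)]
        have e0 : (iota3 p) 0 = p.1 := congrArg Prod.fst (pi3_iota3 p)
        have e1 : (iota3 p) 1 = p.2.1 := congrArg (fun z : ℕ×ℕ×ℕ => z.2.1) (pi3_iota3 p)
        have e2 : (iota3 p) 2 = p.2.2 := congrArg (fun z : ℕ×ℕ×ℕ => z.2.2) (pi3_iota3 p)
        rw [e0, e1, e2]
        exact h1
      · rw [sumN_iff_sumP3, pi3_iota3]
        exact h2
    · rintro ⟨h1, h2⟩
      refine ⟨pi3 d, ?_, iota3_pi3 d⟩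
      rw [mem_B3 Ca Cb hr ha har hco hcob]
      constructor
      · unfold Sig3 pi3
        dsimp only
        rw [← wt3_eq (r := r)]
        exact h1
      · rw [← sumN_iff_sumP3]
        exact h2

end QS

-- ===================== the main theorem =====================


lemma QS.tendsto_quad (c : ℕ) (f : ℕ → ℕ)
    (hf : ∀ n, 2 * f n = 2 * n + c * (n * (n - 1))) :
    Filter.Tendsto (fun n : ℕ => 2 * (f n : ℝ) / (n : ℝ) ^ 2) Filter.atTop (nhds (c:ℝ)) := by
  have t1 : Filter.Tendsto (fun n : ℕ => ((2:ℝ) - c) * (1/(n:ℝ))) Filter.atTop (nhds 0) := by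
    have := tendsto_one_div_atTop_nhds_zero_nat.const_mul ((2:ℝ) - c)
    simpa using this
  have t2 : Filter.Tendsto (fun n : ℕ => (c:ℝ) + ((2:ℝ) - c) * (1/(n:ℝ)))
      Filter.atTop (nhds ((c:ℝ) + 0)) := tendsto_const_nhds.add t1
  rw [add_zero] at t2
  apply t2.congr'
  rw [Filter.eventuallyEq_iff_exists_mem]
  refine ⟨{n | 1 ≤ n}, Filter.mem_atTop 1, ?_⟩
  intro n hn
  have hn1 : 1 ≤ n := hn
  have hnR : (1:ℝ) ≤ (n:ℝ) := by exact_mod_cast hn1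
  have hn0 : (n:ℝ) ≠ 0 := by linarith
  have hfn : 2 * (f n : ℝ) = 2 * n + c * (n * ((n:ℝ) - 1)) := by
    have := hf n
    have hcast : ((2 * f n : ℕ) : ℝ) = ((2 * n + c * (n * (n - 1)) : ℕ) : ℝ) := by
      exact_mod_cast congrArg (Nat.cast : ℕ → ℝ) this
    push_cast [Nat.cast_sub hn1] at hcast
    linarith
  show (c:ℝ) + ((2:ℝ) - c) * (1/(n:ℝ)) = 2 * (f n : ℝ) / (n : ℝ) ^ 2
  rw [eq_div_iff (by positivity)]
  field_simp
  linear_combination (-1:ℝ) * hfn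

lemma QS.tendsto_cube (c : ℕ) (f : ℕ → ℕ)
    (hf : ∀ n, 6 * f n + c * n = 3 * (n * (n + 1)) + c * n ^ 3) :
    Filter.Tendsto (fun n : ℕ => 6 * (f n : ℝ) / (n : ℝ) ^ 3) Filter.atTop (nhds (c:ℝ)) := by
  have t0 : Filter.Tendsto (fun n : ℕ => ((1:ℝ)/(n:ℝ))^2) Filter.atTop (nhds 0) := by
    have h := (tendsto_one_div_atTop_nhds_zero_nat (𝕜 := ℝ)).pow 2
    have h0 : (0:ℝ)^2 = 0 := by norm_num
    rw [h0] at h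
    exact h
  have t1 : Filter.Tendsto (fun n : ℕ => (3:ℝ) * (1/(n:ℝ))) Filter.atTop (nhds 0) := by
    have := tendsto_one_div_atTop_nhds_zero_nat.const_mul (3:ℝ)
    simpa using this
  have t2 : Filter.Tendsto (fun n : ℕ => ((3:ℝ) - c) * ((1/(n:ℝ))^2)) Filter.atTop (nhds 0) := by
    have := t0.const_mul ((3:ℝ) - c)
    simpa using this
  have t3 : Filter.Tendsto
      (fun n : ℕ => (c:ℝ) + (3:ℝ) * (1/(n:ℝ)) + ((3:ℝ) - c) * ((1/(n:ℝ))^2))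
      Filter.atTop (nhds ((c:ℝ) + 0 + 0)) := (tendsto_const_nhds.add t1).add t2
  rw [add_zero, add_zero] at t3
  apply t3.congr'
  rw [Filter.eventuallyEq_iff_exists_mem]
  refine ⟨{n | 1 ≤ n}, Filter.mem_atTop 1, ?_⟩
  intro n hn
  have hn1 : 1 ≤ n := hn
  have hnR : (1:ℝ) ≤ (n:ℝ) := by exact_mod_cast hn1
  have hn0 : (n:ℝ) ≠ 0 := by linarith
  have hfn : 6 * (f n : ℝ) + c * n = 3 * (n * ((n:ℝ) + 1)) + c * (n:ℝ) ^ 3 := by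
    have := hf n
    have hcast : ((6 * f n + c * n : ℕ) : ℝ) = ((3 * (n * (n + 1)) + c * n ^ 3 : ℕ) : ℝ) := by
      exact_mod_cast congrArg (Nat.cast : ℕ → ℝ) this
    push_cast at hcast
    linarith
  show (c:ℝ) + (3:ℝ) * (1/(n:ℝ)) + ((3:ℝ) - c) * ((1/(n:ℝ))^2)
      = 6 * (f n : ℝ) / (n : ℝ) ^ 3
  rw [eq_div_iff (by positivity)]
  field_simp
  linear_combination (-1:ℝ) * hfn


open QS

/-- Lemma 2.5: for `X = C³/Z_r(a/r, -a/r, 1/r)` with slices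
`S_a = C²/Z_r(a/r, 1/r)` and `S_{-a} = C²/Z_r(-a/r, 1/r)`, the multiplicities
(read off from the Hilbert–Samuel asymptotics `dim O_S/m^n ~ mult·n²/2` and
`dim O_X/m^n ~ mult·n³/6`) satisfy `mult₀ X = mult₀ S_a + mult₀ S_{-a}`, the
embedding dimensions (`dim m/m² = dim O/m² - 1`) satisfy
`embdim₀ X = embdim₀ S_a + embdim₀ S_{-a}`, and `embdim₀ X = mult₀ X + 2`. -/
theorem mult_embdim_of_quotient (r a : ℕ) (hr : 2 ≤ r) (ha : 0 < a)
    (har : a < r) (hgcd : Nat.gcd a r = 1) :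
    ∃ mA mB : ℝ,
      Tendsto (fun n : ℕ => 2 * (hsf r ![a, 1] n : ℝ) / (n : ℝ) ^ 2)
        atTop (nhds mA) ∧
      Tendsto (fun n : ℕ => 2 * (hsf r ![r - a, 1] n : ℝ) / (n : ℝ) ^ 2)
        atTop (nhds mB) ∧
      Tendsto (fun n : ℕ => 6 * (hsf r ![a, r - a, 1] n : ℝ) / (n : ℝ) ^ 3)
        atTop (nhds (mA + mB)) ∧
      hsf r ![a, r - a, 1] 2 - 1 = (hsf r ![a, 1] 2 - 1) + (hsf r ![r - a, 1] 2 - 1) ∧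
      ((hsf r ![a, r - a, 1] 2 : ℝ) - 1 = (mA + mB) + 2) := by
  have ha1 : 1 ≤ a := ha
  have hb1 : 1 ≤ r - a := by omega
  have hbr : r - a < r := by omega
  have hgcdb : Nat.gcd (r - a) r = 1 := by
    have h1 : Nat.Coprime r a := Nat.coprime_comm.mp hgcd
    have h2 : Nat.Coprime (r - a) a := (Nat.coprime_sub_self_left (le_of_lt har)).mpr h1
    have h3 : r = a + (r - a) := by omega
    have h4 : Nat.Coprime (r - a) (a + (r - a)) := Nat.coprime_add_self_right.mpr h2
    rwa [← h3] at h4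
  obtain ⟨Ca⟩ := chain_exists (r := r) (a := a) hr ha1 har hgcd
  obtain ⟨Cb⟩ := chain_exists (r := r) (a := r - a) hr hb1 hbr hgcdb
  have HA := hsf_surface hr ha1 har hgcd Ca
  have HB := hsf_surface hr hb1 hbr hgcdb Cb
  have HX := hsf_threefold hr ha1 har hgcd hgcdb Ca Cb
  set ca : ℕ := Ca.N + 1 with hca
  set cb : ℕ := Cb.N + 1 with hcb
  have hA2 : hsf r ![a, 1] 2 = ca + 2 := by
    have := HA 2
    norm_num at this
    omega
  have hB2 : hsf r ![r - a, 1] 2 = cb + 2 := by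
    have := HB 2
    norm_num at this
    omega
  have hX2 : hsf r ![a, r - a, 1] 2 = ca + cb + 3 := by
    have := HX 2
    have hcc : Ca.N + Cb.N + 2 = ca + cb := by omega
    rw [hcc] at this
    norm_num at this
    omega
  refine ⟨(ca : ℝ), (cb : ℝ), ?_, ?_, ?_, ?_, ?_⟩
  · exact QS.tendsto_quad ca (fun n => hsf r ![a, 1] n) HA
  · exact QS.tendsto_quad cb (fun n => hsf r ![r - a, 1] n) HB
  · have hsum : ((ca : ℝ) + cb) = ((ca + cb : ℕ) : ℝ) := by push_cast; ring
    rw [hsum]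
    apply QS.tendsto_cube (ca + cb) (fun n => hsf r ![a, r - a, 1] n)
    intro n
    have := HX n
    have hcc : Ca.N + Cb.N + 2 = ca + cb := by omega
    rw [hcc] at this
    exact this
  · omega
  · rw [hX2]
    push_cast
    ring
end

section
/- Let $r \geq 2$, and let $d, e, k, \lambda$ be real numbers with $d \geq 1$ an integer, $e, k > 0$, $de \leq 1$, $0 \leq \lambda < 1$, $\lambda \neq 1 - de$. Suppose $k' > k$ satisfies $\left(\lambda\frac{k}{r}\right)^3 + \left(\frac{1-de-\lambda}{1-\lambda}\right)^2\left\{\left(\frac{k'}{r} + \frac{\lambda de}{1-de-\lambda}\frac{k}{r}\right)^3 - \left(\frac{\lambda k}{r} + \frac{\lambda de}{1-de-\lambda}\frac{k}{r}\right)^3\right\} < \frac{V}{r^2}$ for some $V > 0$. Then the leading ($m^3$) coefficient of the counting function $r^2\frac{(\lambda km/r)^3}{3!} + \sum_{i = \lceil \lambda km/r\rceil}^{k'm/r - 1} r^2 \frac{(i - \frac{e(ir/m - \lambda k)}{1-\lambda} m \frac{d}{r})^2}{2!}$ is strictly less than $\frac{V}{3!}$; that is, $\lim_{m\to\infty}\frac{3!}{m^3}\left[r^2\frac{(\lambda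 km/r)^3}{3!} + \sum_{i=\lceil\lambda km/r\rceil}^{\lfloor k'm/r\rfloor - 1} \frac{r^2}{2}\left(i - \frac{e d m (ir/m - \lambda k)}{r(1-\lambda)}\right)^2\right] = r^2\left(\frac{\lambda k}{r}\right)^3 + r^2\left(\frac{1-de-\lambda}{1-\lambda}\right)^2\left\{\left(\frac{k'}{r}+\frac{\lambda de}{1-de-\lambda}\frac{k}{r}\right)^3 - \left(\frac{\lambda k}{r}+\frac{\lambda de}{1-de-\lambda}\frac{k}{r}\right)^3\right\} < V$. -/
open Filter Finset

lemma sq_sum_range (u w : ℝ) (n : ℕ) :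
    ∑ j ∈ Finset.range n, (u * j + w) ^ 2
      = u ^ 2 * ((n : ℝ) * (n - 1) * (2 * n - 1)) / 6
        + u * w * ((n : ℝ) * (n - 1)) + (n : ℝ) * w ^ 2 := by
  induction n with
  | zero => simp
  | succ n ih =>
    rw [Finset.sum_range_succ, ih]
    push_cast
    ring

lemma Icc_sum_eq (a : ℤ) (n : ℕ) (f : ℤ → ℝ) :
    ∑ i ∈ Finset.Icc a (a + n - 1), f i = ∑ j ∈ Finset.range n, f (a + j) := by
  rw [show Finset.Icc a (a + n - 1)
      = (Finset.range n).map ⟨fun j : ℕ => a + j, fun x y h => by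
          simpa using h⟩ from ?_, Finset.sum_map]
  · rfl
  · ext x
    simp only [Finset.mem_Icc, Finset.mem_map, Finset.mem_range,
      Function.Embedding.coeFn_mk]
    constructor
    · rintro ⟨h1, h2⟩
      exact ⟨(x - a).toNat, by omega, by change a + ((x - a).toNat : ℤ) = x; omega⟩
    · rintro ⟨j, hj, rfl⟩
      show a ≤ a + (j:ℤ) ∧ a + (j:ℤ) ≤ a + n - 1
      omega

lemma tendsto_ceil_div (y : ℝ) :
    Tendsto (fun m : ℕ => (⌈y * m⌉ : ℝ) / m) atTop (nhds y) := by
  have h1 : Tendsto (fun m : ℕ => y + 1 / (m : ℝ)) atTop (nhds y) := by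
    simpa using tendsto_const_nhds.add
      ((tendsto_const_nhds (x := (1:ℝ))).div_atTop tendsto_natCast_atTop_atTop)
  refine tendsto_of_tendsto_of_tendsto_of_le_of_le' tendsto_const_nhds h1 ?_ ?_
  · filter_upwards [eventually_gt_atTop 0] with m hm
    have hm' : (0 : ℝ) < m := by exact_mod_cast hm
    rw [le_div_iff₀ hm']
    exact Int.le_ceil _
  · filter_upwards [eventually_gt_atTop 0] with m hm
    have hm' : (0 : ℝ) < m := by exact_mod_cast hm
    rw [div_le_iff₀ hm']
    have h2 := Int.ceil_lt_add_one (y * m)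
    have h3 : 1 / (m:ℝ) * m = 1 := by field_simp
    nlinarith [h2, h3]

lemma tendsto_floor_div (y : ℝ) :
    Tendsto (fun m : ℕ => (⌊y * m⌋ : ℝ) / m) atTop (nhds y) := by
  have h1 : Tendsto (fun m : ℕ => y - 1 / (m : ℝ)) atTop (nhds y) := by
    simpa using tendsto_const_nhds.sub
      ((tendsto_const_nhds (x := (1:ℝ))).div_atTop tendsto_natCast_atTop_atTop)
  refine tendsto_of_tendsto_of_tendsto_of_le_of_le' h1 tendsto_const_nhds ?_ ?_
  · filter_upwards [eventually_gt_atTop 0] with m hm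
    have hm' : (0 : ℝ) < m := by exact_mod_cast hm
    rw [le_div_iff₀ hm']
    have h2 := Int.sub_one_lt_floor (y * m)
    have h3 : 1 / (m:ℝ) * m = 1 := by field_simp
    nlinarith [h2, h3]
  · filter_upwards [eventually_gt_atTop 0] with m hm
    have hm' : (0 : ℝ) < m := by exact_mod_cast hm
    rw [div_le_iff₀ hm']
    exact Int.floor_le _

set_option maxHeartbeats 1000000 in
/-- The Riemann-sum asymptotic at the heart of Lemma 2.3: the leading (`m³`)
coefficient of the counting function
`r²(λkm/r)³/3! + ∑_{i=⌈λkm/r⌉}^{k'm/r - 1} r²(i - e(ir/m - λk)md/(r(1-λ)))²/2!`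
equals the cubic expression
`r²(λk/r)³ + r²((1-de-λ)/(1-λ))²{(k'/r + λde k/(r(1-de-λ)))³ - (λk/r + λde k/(r(1-de-λ)))³}`,
which is `< V` whenever the displayed inequality `< V/r²` holds. -/
theorem riemann_sum_asymptotic (r d : ℕ) (e k lam k' V : ℝ)
    (hr : 2 ≤ r) (hd : 1 ≤ d) (he : 0 < e) (hk : 0 < k)
    (hde : (d : ℝ) * e ≤ 1) (hlam₀ : 0 ≤ lam) (hlam₁ : lam < 1)
    (hlamne : lam ≠ 1 - (d : ℝ) * e) (hk' : k < k') (hV : 0 < V)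
    (hineq :
      (lam * (k / r)) ^ 3 +
        ((1 - (d : ℝ) * e - lam) / (1 - lam)) ^ 2 *
          ((k' / r + lam * ((d : ℝ) * e) / (1 - (d : ℝ) * e - lam) * (k / r)) ^ 3 -
            (lam * k / r + lam * ((d : ℝ) * e) / (1 - (d : ℝ) * e - lam) * (k / r)) ^ 3)
        < V / (r : ℝ) ^ 2) :
    Tendsto
      (fun m : ℕ =>
        (6 / (m : ℝ) ^ 3) *
          ((r : ℝ) ^ 2 * (lam * k * m / r) ^ 3 / 6 +
            ∑ i ∈ Finset.Icc (⌈lam * k * (m : ℝ) / r⌉ : ℤ) (⌊k' * (m : ℝ) / r⌋ - 1),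
              ((r : ℝ) ^ 2 / 2) *
                ((i : ℝ) -
                  e * (d : ℝ) * m * ((i : ℝ) * r / m - lam * k) / (r * (1 - lam))) ^ 2))
      atTop
      (nhds
        ((r : ℝ) ^ 2 * (lam * k / r) ^ 3 +
          (r : ℝ) ^ 2 * ((1 - (d : ℝ) * e - lam) / (1 - lam)) ^ 2 *
            ((k' / r + lam * ((d : ℝ) * e) / (1 - (d : ℝ) * e - lam) * (k / r)) ^ 3 -
              (lam * k / r + lam * ((d : ℝ) * e) / (1 - (d : ℝ) * e - lam) * (k / r)) ^ 3))) ∧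
    (r : ℝ) ^ 2 * (lam * k / r) ^ 3 +
        (r : ℝ) ^ 2 * ((1 - (d : ℝ) * e - lam) / (1 - lam)) ^ 2 *
          ((k' / r + lam * ((d : ℝ) * e) / (1 - (d : ℝ) * e - lam) * (k / r)) ^ 3 -
            (lam * k / r + lam * ((d : ℝ) * e) / (1 - (d : ℝ) * e - lam) * (k / r)) ^ 3)
      < V := by
  have hrn : 0 < r := by omega
  have hrR : (0:ℝ) < r := by exact_mod_cast hrn
  have hr0 : (r:ℝ) ≠ 0 := ne_of_gt hrR
  have hlampos : (0:ℝ) < 1 - lam := by linarith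
  have hlamne0 : (1:ℝ) - lam ≠ 0 := ne_of_gt hlampos
  have hdene : (1:ℝ) - (d:ℝ)*e - lam ≠ 0 := fun h => hlamne (by linarith)
  have hineq' :
      (r : ℝ) ^ 2 * (lam * k / r) ^ 3 +
        (r : ℝ) ^ 2 * ((1 - (d : ℝ) * e - lam) / (1 - lam)) ^ 2 *
          ((k' / r + lam * ((d : ℝ) * e) / (1 - (d : ℝ) * e - lam) * (k / r)) ^ 3 -
            (lam * k / r + lam * ((d : ℝ) * e) / (1 - (d : ℝ) * e - lam) * (k / r)) ^ 3)
      < V := by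
    have h := (lt_div_iff₀ (by positivity : (0:ℝ) < (r:ℝ)^2)).mp hineq
    calc (r : ℝ) ^ 2 * (lam * k / r) ^ 3 +
        (r : ℝ) ^ 2 * ((1 - (d : ℝ) * e - lam) / (1 - lam)) ^ 2 *
          ((k' / r + lam * ((d : ℝ) * e) / (1 - (d : ℝ) * e - lam) * (k / r)) ^ 3 -
            (lam * k / r + lam * ((d : ℝ) * e) / (1 - (d : ℝ) * e - lam) * (k / r)) ^ 3)
        = ((lam * (k / r)) ^ 3 +
            ((1 - (d : ℝ) * e - lam) / (1 - lam)) ^ 2 *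
              ((k' / r + lam * ((d : ℝ) * e) / (1 - (d : ℝ) * e - lam) * (k / r)) ^ 3 -
                (lam * k / r + lam * ((d : ℝ) * e) / (1 - (d : ℝ) * e - lam) * (k / r)) ^ 3))
            * (r:ℝ)^2 := by ring
      _ < V := h
  refine ⟨?_, hineq'⟩
  set A : ℝ := lam * k / r with hA
  set B : ℝ := k' / r with hB
  set c : ℝ := e * d / (1 - lam) with hc
  set u : ℝ := 1 - c with hu
  have huval : u = (1 - (d:ℝ)*e - lam)/(1 - lam) := by
    rw [hu, hc]; field_simp; ring
  have hune : u ≠ 0 := by rw [huval]; exact div_ne_zero hdene hlamne0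
  have hAB : A < B := by
    rw [hA, hB]
    have hlk : lam * k < k' := lt_of_le_of_lt (mul_le_of_le_one_left hk.le hlam₁.le) hk'
    exact div_lt_div_of_pos_right hlk hrR
  have hcont : Continuous (fun p : ℝ×ℝ×ℝ =>
      (r:ℝ)^2*A^3 + 3*(r:ℝ)^2*(u^2*(p.2.1*(p.2.1-p.2.2)*(2*p.2.1-p.2.2))/6
        + u*(u*p.1+c*A)*(p.2.1*(p.2.1-p.2.2)) + p.2.1*(u*p.1+c*A)^2)) := by
    fun_prop
  have hseq : Tendsto (fun m : ℕ =>
      (((⌈A*(m:ℝ)⌉:ℤ):ℝ)/m, ((((⌊B*(m:ℝ)⌋:ℤ):ℝ) - ((⌈A*(m:ℝ)⌉:ℤ):ℝ))/m, 1/(m:ℝ))))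
      atTop (nhds (A, B-A, 0)) := by
    refine Tendsto.prodMk_nhds (tendsto_ceil_div A) (Tendsto.prodMk_nhds ?_ ?_)
    · have := (tendsto_floor_div B).sub (tendsto_ceil_div A)
      simpa [sub_div] using this
    · exact tendsto_one_div_atTop_nhds_zero_nat
  have hcomp := (hcont.tendsto (A, B-A, 0)).comp hseq
  have hval : (r:ℝ)^2*A^3 + 3*(r:ℝ)^2*(u^2*((B-A)*((B-A)-0)*(2*(B-A)-0))/6
        + u*(u*A+c*A)*((B-A)*((B-A)-0)) + (B-A)*(u*A+c*A)^2)
      = (r : ℝ) ^ 2 * A ^ 3 +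
          (r : ℝ) ^ 2 * ((1 - (d : ℝ) * e - lam) / (1 - lam)) ^ 2 *
            ((B + lam * ((d : ℝ) * e) / (1 - (d : ℝ) * e - lam) * (k / r)) ^ 3 -
              (A + lam * ((d : ℝ) * e) / (1 - (d : ℝ) * e - lam) * (k / r)) ^ 3) := by
    rw [hu, hc, hA, hB]
    have hdene2 : (1:ℝ) - lam - e * d ≠ 0 := fun h => hdene (by linarith)
    have hdene3 : (1:ℝ) - e * d - lam ≠ 0 := fun h => hdene (by linarith)
    field_simp
    ring
  have hev : (fun m : ℕ => (fun p : ℝ×ℝ×ℝ =>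
      (r:ℝ)^2*A^3 + 3*(r:ℝ)^2*(u^2*(p.2.1*(p.2.1-p.2.2)*(2*p.2.1-p.2.2))/6
        + u*(u*p.1+c*A)*(p.2.1*(p.2.1-p.2.2)) + p.2.1*(u*p.1+c*A)^2))
      (((⌈A*(m:ℝ)⌉:ℤ):ℝ)/m, ((((⌊B*(m:ℝ)⌋:ℤ):ℝ) - ((⌈A*(m:ℝ)⌉:ℤ):ℝ))/m, 1/(m:ℝ))))
      =ᶠ[atTop] (fun m : ℕ =>
        (6 / (m : ℝ) ^ 3) *
          ((r : ℝ) ^ 2 * (lam * k * m / r) ^ 3 / 6 +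
            ∑ i ∈ Finset.Icc (⌈lam * k * (m : ℝ) / r⌉ : ℤ) (⌊k' * (m : ℝ) / r⌋ - 1),
              ((r : ℝ) ^ 2 / 2) *
                ((i : ℝ) -
                  e * (d : ℝ) * m * ((i : ℝ) * r / m - lam * k) / (r * (1 - lam))) ^ 2)) := by
    have hBA : (0:ℝ) < B - A := by linarith
    filter_upwards [eventually_ge_atTop 1,
      tendsto_natCast_atTop_atTop.eventually_ge_atTop (2/(B-A))] with m hm1 hm2
    have hmR : (0:ℝ) < m := by exact_mod_cast Nat.lt_of_lt_of_le Nat.zero_lt_one hm1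
    have hm0 : (m:ℝ) ≠ 0 := ne_of_gt hmR
    have h2 : (2:ℝ) ≤ (B - A) * m := by
      rw [div_le_iff₀ hBA] at hm2
      linarith [hm2]
    have hargA : lam * k * (m:ℝ) / r = A * m := by rw [hA]; ring
    have hargB : k' * (m:ℝ) / r = B * m := by rw [hB]; ring
    rw [hargA, hargB]
    set a : ℤ := ⌈A * (m:ℝ)⌉ with ha
    have hab : a ≤ ⌊B * (m:ℝ)⌋ := by
      rw [ha]
      refine Int.ceil_le.mpr ?_
      have hf := Int.sub_one_lt_floor (B * (m:ℝ))
      linarith [hf, h2]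
    set n : ℕ := (⌊B*(m:ℝ)⌋ - a).toNat with hn
    have hnz : (n:ℤ) = ⌊B*(m:ℝ)⌋ - a := by rw [hn]; omega
    have hnR : (n:ℝ) = ((⌊B*(m:ℝ)⌋:ℤ):ℝ) - ((a:ℤ):ℝ) := by exact_mod_cast hnz
    have hpt : ∀ i : ℤ, ((r:ℝ)^2/2) * ((i:ℝ) - e*(d:ℝ)*m*((i:ℝ)*r/m - lam*k)/(r*(1-lam)))^2
        = ((r:ℝ)^2/2) * (u*(i:ℝ) + c*A*(m:ℝ))^2 := by
      intro i
      have : (i:ℝ) - e*(d:ℝ)*m*((i:ℝ)*r/m - lam*k)/(r*(1-lam)) = u*(i:ℝ) + c*A*(m:ℝ) := by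
        rw [hu, hc, hA]
        field_simp
        ring
      rw [this]
    have hsum : ∑ i ∈ Finset.Icc a (⌊B*(m:ℝ)⌋ - 1),
          ((r:ℝ)^2/2) * ((i:ℝ) - e*(d:ℝ)*m*((i:ℝ)*r/m - lam*k)/(r*(1-lam)))^2
        = ((r:ℝ)^2/2) * (u^2*((n:ℝ)*((n:ℝ)-1)*(2*(n:ℝ)-1))/6
            + u*(u*((a:ℤ):ℝ)+c*A*(m:ℝ))*((n:ℝ)*((n:ℝ)-1))
            + (n:ℝ)*(u*((a:ℤ):ℝ)+c*A*(m:ℝ))^2) := by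
      calc ∑ i ∈ Finset.Icc a (⌊B*(m:ℝ)⌋ - 1),
            ((r:ℝ)^2/2) * ((i:ℝ) - e*(d:ℝ)*m*((i:ℝ)*r/m - lam*k)/(r*(1-lam)))^2
          = ∑ i ∈ Finset.Icc a (a + (n:ℤ) - 1),
              (fun i : ℤ => ((r:ℝ)^2/2) * (u*(i:ℝ) + c*A*(m:ℝ))^2) i := by
            rw [show (⌊B*(m:ℝ)⌋ - 1 : ℤ) = a + (n:ℤ) - 1 by omega]
            exact Finset.sum_congr rfl (fun i _ => hpt i)
        _ = ∑ j ∈ Finset.range n,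
              ((r:ℝ)^2/2) * (u*(((a + (j:ℤ)):ℤ):ℝ) + c*A*(m:ℝ))^2 := Icc_sum_eq a n _
        _ = ∑ j ∈ Finset.range n,
              ((r:ℝ)^2/2) * (u*(j:ℝ) + (u*((a:ℤ):ℝ) + c*A*(m:ℝ)))^2 := by
            refine Finset.sum_congr rfl (fun j _ => ?_)
            push_cast
            ring
        _ = ((r:ℝ)^2/2) * ∑ j ∈ Finset.range n, (u*(j:ℝ) + (u*((a:ℤ):ℝ) + c*A*(m:ℝ)))^2 := by
            rw [Finset.mul_sum]
        _ = _ := by rw [sq_sum_range]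
    rw [hsum, hnR]
    field_simp
    ring
  have := (Filter.Tendsto.congr' hev hcomp)
  rw [hval] at this
  exact this
end
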